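/- arXiv:1804.00728 — 11 statements merged into one kernel-verified Lean document; each statement's English description precedes it below -/
import Mathlib

section
/- Let G be a torsion group and let n be an element order of G such that Ω(n) (the number of prime factors counted with multiplicity) is maximum among all element orders. Then the proper reduced power graph RP*(G) is Ω(n)-partite, and its clique number and chromatic number both equal Ω(n). -/
open SimpleGraph

/-- The reduced power graph of a group. -/
def redPowGraph (G : Type*) [Group G] : SimpleGraph G where
  Adj u v := Subgroup.zpowers u < Subgroup.zpowers v ∨ Subgroup.zpowers v < Subgroup.zpowers u
  symm := ⟨fun u v h => h.symm⟩
  loopless := ⟨fun u h => by cases h <;> simp_all⟩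

/-- The proper reduced power graph: induced subgraph on the non-identity elements. -/
def properRedPowGraph (G : Type*) [Group G] : SimpleGraph {x : G // x ≠ 1} :=
  SimpleGraph.comap Subtype.val (redPowGraph G)

/-- Ω(n): number of prime factors counted with multiplicity. -/
def bigOmega (n : ℕ) : ℕ := n.primeFactorsList.length

/-!
Ω ∘ orderOf strictly increases along proper inclusions of finite cyclic subgroups, so on the
non-identity elements it is a proper colouring of `RP*(G)` with colours `1, …, Ω(n)`; this bounds
the chromatic number, hence also every clique, by `Ω(n)`. Conversely, if `x` has order `n`, then
peeling off one prime at a time gives a chain `⟨x⟩ > ⟨x ^ p₁⟩ > ⟨x ^ (p₁ p₂)⟩ > ⋯` of `Ω(n)`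
nontrivial cyclic subgroups, i.e. a clique of size `Ω(n)`.
-/

open ArithmeticFunction

open scoped ArithmeticFunction.Omega

lemma bigOmega_eq_cardFactors (n : ℕ) : bigOmega n = Ω n :=
  cardFactors_apply.symm

lemma cardFactors_lt_of_dvd_of_ne {a b : ℕ} (hb : b ≠ 0) (hab : a ∣ b) (hne : a ≠ b) :
    Ω a < Ω b := by
  obtain ⟨c, rfl⟩ := hab
  have hc1 : c ≠ 1 := by rintro rfl; exact hne (mul_one a).symm
  have hc : 0 < Ω c := cardFactors_pos_iff_one_lt.mpr (by have := right_ne_zero_of_mul hb; omega)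
  rw [cardFactors_mul (left_ne_zero_of_mul hb) (right_ne_zero_of_mul hb)]
  omega

lemma cardFactors_div_add_one {m p : ℕ} (hm : m ≠ 0) (hp : p.Prime) (hpm : p ∣ m) :
    Ω (m / p) + 1 = Ω m := by
  obtain ⟨c, rfl⟩ := hpm
  rw [Nat.mul_div_cancel_left _ hp.pos, cardFactors_mul hp.ne_zero (right_ne_zero_of_mul hm),
    cardFactors_apply_prime hp, add_comm]

section Group

variable {G : Type*} [Group G]

lemma cardFactors_orderOf_lt_of_zpowers_lt {u v : G} (hv : IsOfFinOrder v)
    (h : Subgroup.zpowers u < Subgroup.zpowers v) :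
    Ω (orderOf u) < Ω (orderOf v) := by
  have : Finite (Subgroup.zpowers v) := hv.finite_zpowers.to_subtype
  refine cardFactors_lt_of_dvd_of_ne hv.orderOf_pos.ne' ?_ fun heq => h.ne ?_
  · exact orderOf_dvd_of_mem_zpowers (h.le (Subgroup.mem_zpowers u))
  · exact Subgroup.eq_of_le_of_card_ge h.le (by rw [Nat.card_zpowers, Nat.card_zpowers, heq])

lemma one_le_cardFactors_orderOf {x : G} (hx : IsOfFinOrder x) (hx1 : x ≠ 1) :
    1 ≤ Ω (orderOf x) :=
  cardFactors_pos_iff_one_lt.mpr <|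
    (Nat.one_lt_iff_ne_zero_and_ne_one).mpr ⟨hx.orderOf_pos.ne', mt orderOf_eq_one_iff.mp hx1⟩

lemma properRedPowGraph.cardFactors_orderOf_ne_of_adj (hT : ∀ x : G, IsOfFinOrder x)
    {a b : {x : G // x ≠ 1}} (h : (properRedPowGraph G).Adj a b) :
    Ω (orderOf a.val) ≠ Ω (orderOf b.val) := by
  rcases h with h | h
  · exact (cardFactors_orderOf_lt_of_zpowers_lt (hT b.val) h).ne
  · exact (cardFactors_orderOf_lt_of_zpowers_lt (hT a.val) h).ne'

lemma properRedPowGraph.colorable (hT : ∀ x : G, IsOfFinOrder x) {k : ℕ}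
    (hk : ∀ y : G, Ω (orderOf y) ≤ k) : (properRedPowGraph G).Colorable k := by
  have hpos (v : {x : G // x ≠ 1}) := one_le_cardFactors_orderOf (hT v.val) v.2
  let color (v : {x : G // x ≠ 1}) : Fin k :=
    ⟨Ω (orderOf v.val) - 1, by have := hk v.val; have := hpos v; omega⟩
  refine ⟨Coloring.mk color fun {a b} hab hcol => cardFactors_orderOf_ne_of_adj hT hab ?_⟩
  have := hpos a
  have := hpos b
  have := congrArg Fin.val hcol
  simp only [color] at this
  omega

lemma properRedPowGraph.exists_isNClique_cardFactors_orderOf (x : G) :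
    ∃ s, (properRedPowGraph G).IsNClique (Ω (orderOf x)) s ∧
      ∀ v ∈ s, Subgroup.zpowers v.val ≤ Subgroup.zpowers x := by
  classical
  induction h : Ω (orderOf x) generalizing x with
  | zero => exact ⟨∅, by simp, by simp⟩
  | succ k ih =>
    have hx0 : orderOf x ≠ 0 := by rintro h0; simp [h0] at h
    have hx1 : x ≠ 1 := by rintro rfl; simp at h
    obtain ⟨p, hp, hpx⟩ :=
      Nat.exists_prime_and_dvd (n := orderOf x) (by rintro h1; simp [h1] at h)
    have hΩ : Ω (orderOf (x ^ p)) = k := by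
      have := cardFactors_div_add_one hx0 hp hpx
      rw [orderOf_pow_of_dvd hp.ne_zero hpx]
      omega
    have hlt : Subgroup.zpowers (x ^ p) < Subgroup.zpowers x := by
      refine (Subgroup.zpowers_le.mpr (Subgroup.pow_mem _ (Subgroup.mem_zpowers x) p)).lt_of_ne
        fun heq => ?_
      have : orderOf (x ^ p) = orderOf x := by rw [← Nat.card_zpowers, heq, Nat.card_zpowers]
      rw [this, h] at hΩ
      omega
    obtain ⟨s, hs, hsx⟩ := ih (x ^ p) hΩ
    refine ⟨insert ⟨x, hx1⟩ s, hs.insert fun v hv => Or.inr ((hsx v hv).trans_lt hlt), ?_⟩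
    intro v hv
    rcases Finset.mem_insert.mp hv with rfl | hv
    · exact le_rfl
    · exact (hsx v hv).trans hlt.le

end Group

/-- For a torsion group `G` and an element order `n` maximizing Ω, the proper
reduced power graph is Ω(n)-partite, and its clique number and chromatic number equal Ω(n). -/
theorem stmt0 {G : Type*} [Group G] (hT : ∀ x : G, IsOfFinOrder x)
    (n : ℕ) (hn : ∃ x : G, orderOf x = n)
    (hmax : ∀ y : G, bigOmega (orderOf y) ≤ bigOmega n) :
    (properRedPowGraph G).Colorable (bigOmega n) ∧
    IsGreatest {k | ∃ s, (properRedPowGraph G).IsNClique k s} (bigOmega n) ∧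
    (properRedPowGraph G).chromaticNumber = (bigOmega n : ℕ∞) := by
  obtain ⟨x, rfl⟩ := hn
  simp only [bigOmega_eq_cardFactors] at hmax ⊢
  have hcol := properRedPowGraph.colorable hT hmax
  obtain ⟨s, hs, -⟩ := properRedPowGraph.exists_isNClique_cardFactors_orderOf x
  refine ⟨hcol, ⟨⟨s, hs⟩, fun k ⟨t, ht⟩ => ht.card_eq ▸ ht.isClique.card_le_of_colorable hcol⟩,
    le_antisymm hcol.chromaticNumber_le ?_⟩
  exact hs.card_eq ▸ hs.isClique.card_le_chromaticNumber
end

section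
/- Let G be a non-cyclic group of order n. Then the clique number of RP(G) is strictly less than the clique number of RP(ℤ_n), and likewise the chromatic number of RP(G) is strictly less than that of RP(ℤ_n). -/
/-!
Colour each element of a group by `Ω` of its order. If `⟨u⟩ ⊊ ⟨v⟩` then the order of `u` is a
proper divisor of the order of `v`, so `Ω` strictly increases along edges and the colouring is
proper. In a non-cyclic group of order `n` every element order is a proper divisor of `n`, so
`Ω(n)` colours suffice: `ω(RP(G)) ≤ χ(RP(G)) ≤ Ω(n)`. In `ℤ_n`, multiplying in the prime factors
of `n` one at a time gives a divisor chain `1 = d₀ ∣ d₁ ∣ ⋯ ∣ d_{Ω(n)} = n`, and the subgroups of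
these orders form a clique of size `Ω(n) + 1`, so `Ω(n) < ω(RP(ℤ_n)) ≤ χ(RP(ℤ_n))`.
-/

open SimpleGraph

open Subgroup

lemma bigOmega_lt_of_dvd_of_ne {a b : ℕ} (hb : b ≠ 0) (hab : a ∣ b) (hne : a ≠ b) :
    bigOmega a < bigOmega b := by
  obtain ⟨c, rfl⟩ := hab
  have ha : a ≠ 0 := left_ne_zero_of_mul hb
  have hc : c ≠ 0 := right_ne_zero_of_mul hb
  have hc1 : 1 < c := Nat.one_lt_iff_ne_zero_and_ne_one.mpr ⟨hc, by rintro rfl; simp at hne⟩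
  have hΩc : 0 < ArithmeticFunction.cardFactors c :=
    ArithmeticFunction.cardFactors_pos_iff_one_lt.mpr hc1
  simp only [bigOmega, ← ArithmeticFunction.cardFactors_apply,
    ArithmeticFunction.cardFactors_mul ha hc]
  omega

lemma bigOmega_prod_take_primeFactorsList {n i : ℕ} (hi : i ≤ bigOmega n) :
    bigOmega (n.primeFactorsList.take i).prod = i := by
  have hperm := Nat.primeFactorsList_unique (l := n.primeFactorsList.take i) rfl fun p hp =>
    Nat.prime_of_mem_primeFactorsList (List.mem_of_mem_take hp)
  rw [bigOmega, ← hperm.length_eq, List.length_take]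
  exact min_eq_left hi

section redPowGraph

variable {G : Type*} [Group G]

lemma bigOmega_orderOf_lt_of_zpowers_lt [Finite G] {x y : G} (h : zpowers x < zpowers y) :
    bigOmega (orderOf x) < bigOmega (orderOf y) := by
  refine bigOmega_lt_of_dvd_of_ne (orderOf_pos y).ne'
    (orderOf_dvd_of_mem_zpowers (zpowers_le.mp h.le)) fun he => h.ne ?_
  exact eq_of_le_of_card_ge h.le (by rw [Nat.card_zpowers, Nat.card_zpowers, he])

lemma bigOmega_orderOf_lt_of_not_isCyclic [Finite G] (hG : ¬ IsCyclic G) (x : G) :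
    bigOmega (orderOf x) < bigOmega (Nat.card G) :=
  bigOmega_lt_of_dvd_of_ne Nat.card_pos.ne' (orderOf_dvd_natCard x) fun he =>
    hG (isCyclic_of_orderOf_eq_card x he)

lemma redPowGraph_colorable_of_bigOmega_orderOf_lt [Finite G] {k : ℕ}
    (h : ∀ x : G, bigOmega (orderOf x) < k) : (redPowGraph G).Colorable k := by
  refine ⟨Coloring.mk (fun x => ⟨bigOmega (orderOf x), h x⟩) fun {u v} huv => ?_⟩
  rw [Ne, Fin.mk.injEq]
  rcases huv with huv | hvu
  · exact (bigOmega_orderOf_lt_of_zpowers_lt huv).ne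
  · exact (bigOmega_orderOf_lt_of_zpowers_lt hvu).ne'

lemma le_cliqueNum_redPowGraph_of_strictMono [Finite G] {m : ℕ} (f : Fin m → G)
    (hf : StrictMono fun i => zpowers (f i)) : m ≤ (redPowGraph G).cliqueNum := by
  classical
  have hclique : (redPowGraph G).IsClique (Finset.univ.image f : Set G) := by
    simp only [Finset.coe_image, Finset.coe_univ, Set.image_univ]
    rintro _ ⟨i, rfl⟩ _ ⟨j, rfl⟩ hij
    rcases lt_or_gt_of_ne (ne_of_apply_ne f hij) with h | h
    · exact Or.inl (hf h)
    · exact Or.inr (hf h)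
  have hcard : (Finset.univ.image f).card = m := by
    rw [Finset.card_image_of_injective _ (hf.injective.of_comp (f := zpowers)), Finset.card_univ,
      Fintype.card_fin]
  exact hcard ▸ hclique.card_le_cliqueNum

/-- With `g` a generator and `L` the prime factors of `|G|`, the elements `g ^ (L.drop i).prod`
have orders `(L.take i).prod`, whose `Ω` is `i`. -/
lemma IsCyclic.exists_strictMono_zpowers [Finite G] [IsCyclic G] :
    ∃ f : Fin (bigOmega (Nat.card G) + 1) → G, StrictMono fun i => zpowers (f i) := by
  obtain ⟨g, hg⟩ := IsCyclic.exists_ofOrder_eq_natCard (α := G)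
  set L := (Nat.card G).primeFactorsList
  have horder : ∀ i, orderOf (g ^ (L.drop i).prod) = (L.take i).prod := by
    intro i
    have hsplit : (L.take i).prod * (L.drop i).prod = Nat.card G := by
      rw [L.prod_take_mul_prod_drop i, Nat.prod_primeFactorsList Nat.card_pos.ne']
    have hdrop : (L.drop i).prod ≠ 0 := right_ne_zero_of_mul (hsplit ▸ Nat.card_pos.ne')
    rw [orderOf_pow_of_dvd hdrop (hg ▸ Dvd.intro_left _ hsplit), hg, ← hsplit,
      Nat.mul_div_cancel _ (Nat.pos_of_ne_zero hdrop)]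
  refine ⟨fun i => g ^ (L.drop i).prod, fun i j hij => lt_of_le_of_ne ?_ fun heq => ?_⟩
  · obtain ⟨c, hc⟩ := (L.drop_sublist_drop_left hij.le).prod_dvd_prod
    dsimp only
    rw [zpowers_le, hc, pow_mul]
    exact pow_mem (mem_zpowers _) c
  · have := congrArg (fun H : Subgroup G => bigOmega (Nat.card H)) heq
    simp only [Nat.card_zpowers, horder] at this
    rw [bigOmega_prod_take_primeFactorsList (Nat.lt_succ_iff.mp i.isLt),
      bigOmega_prod_take_primeFactorsList (Nat.lt_succ_iff.mp j.isLt)] at this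
    exact hij.ne (Fin.ext this)

end redPowGraph

/-- For a non-cyclic group of order n, the clique number and chromatic number of
RP(G) are strictly smaller than those of RP(ℤ_n). -/
theorem stmt1 {G : Type*} [Group G] [Fintype G] (n : ℕ) (hn : Fintype.card G = n)
    (hnc : ¬ IsCyclic G) :
    (redPowGraph G).cliqueNum < (redPowGraph (Multiplicative (ZMod n))).cliqueNum ∧
    (redPowGraph G).chromaticNumber <
      (redPowGraph (Multiplicative (ZMod n))).chromaticNumber := by
  have hcardG : Nat.card G = n := Nat.card_eq_fintype_card.trans hn
  have : NeZero n := ⟨hcardG ▸ Nat.card_pos.ne'⟩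
  have hcardZ : Nat.card (Multiplicative (ZMod n)) = n := Nat.card_zmod n
  have hcol : (redPowGraph G).Colorable (bigOmega n) :=
    redPowGraph_colorable_of_bigOmega_orderOf_lt (hcardG ▸ bigOmega_orderOf_lt_of_not_isCyclic hnc)
  have hχG : (redPowGraph G).chromaticNumber ≤ bigOmega n := hcol.chromaticNumber_le
  have hωG : (redPowGraph G).cliqueNum ≤ bigOmega n := by
    exact_mod_cast (redPowGraph G).cliqueNum_le_chromaticNumber.trans hχG
  have hωZ : bigOmega n + 1 ≤ (redPowGraph (Multiplicative (ZMod n))).cliqueNum := by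
    obtain ⟨f, hf⟩ := IsCyclic.exists_strictMono_zpowers (G := Multiplicative (ZMod n))
    simpa only [hcardZ] using le_cliqueNum_redPowGraph_of_strictMono f hf
  refine ⟨by omega, hχG.trans_lt (lt_of_lt_of_le ?_ cliqueNum_le_chromaticNumber)⟩
  exact_mod_cast Nat.lt_of_succ_le hωZ
end

section
/- Let G be a finite group. Then RP*(G) is a complete bipartite graph if and only if G is isomorphic to ℤ_{p²}, ℤ_{pq}, or the quaternion group Q₈, where p and q are distinct primes. -/
/-!
In a complete bipartite `RP*(G)` the elements of prime order form one part: two of them are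
never adjacent, while every other non-identity element is adjacent to a power of itself of prime
order. Hence a non-identity element `b` of non-prime order contains every element of prime order
in `⟨b⟩`, and has no power of a different non-prime order, so `|b| = pq` for primes `p`, `q`.

If `p ≠ q`, the elements `b ^ p` and `b ^ q` lie in `⟨x⟩` for every `x` of non-prime order, so
`⟨b⟩ = ⟨x⟩` and `G = ⟨b⟩ ≅ ℤ_pq`. If `p = q`, `G` is a `p`-group in which `c = b ^ p` generates
the only subgroup of order `p`; this subgroup is central and contains every `p`-th power. The
`p`-th power map therefore has kernel and image inside `⟨c⟩`, so `|G| ≤ p²` as soon as it is a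
homomorphism. For odd `p` it is one on any subgroup of order `p³` (commutators lie in `⟨c⟩` and
`p ∣ C(p, 2)`), so no such subgroup exists. For `p = 2` it is one when `G` is abelian; otherwise,
for non-commuting `u` and `v`, `g ↦ ⁅u, g⁆` is a homomorphism into `⟨c⟩` whose kernel, the
centralizer of `u`, is `⟨u⟩`. So `|G| ≤ 8`, and `u`, `v` satisfy the defining relations of `Q₈`.

Conversely, in `ℤ_{p²}`, `ℤ_{pq}` and `Q₈` all non-identity elements of non-prime order have the
same order and contain every element of prime order.
-/

open SimpleGraph

/-- A graph is complete k-partite if its vertices can be partitioned into k nonempty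
independent sets with every pair of vertices in different parts adjacent. -/
def IsCompleteKPartite {V : Type*} (Γ : SimpleGraph V) (k : ℕ) : Prop :=
  ∃ P : V → Fin k, Function.Surjective P ∧ ∀ u v, Γ.Adj u v ↔ P u ≠ P v

open Subgroup
open scoped commutatorElement

lemma ne_one_of_prime_orderOf {G : Type*} [Monoid G] {x : G} (hx : (orderOf x).Prime) : x ≠ 1 :=
  fun h => hx.ne_one (by rw [h, orderOf_one])

lemma orderOf_pow_of_orderOf_eq_mul {G : Type*} [Monoid G] {x : G} {r s : ℕ} (hs : s ≠ 0)
    (hx : orderOf x = r * s) : orderOf (x ^ s) = r := by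
  rw [orderOf_pow_of_dvd hs (hx ▸ dvd_mul_left s r), hx,
    Nat.mul_div_cancel _ (Nat.pos_of_ne_zero hs)]

lemma ne_one_of_orderOf_eq_prime_mul {G : Type*} [Monoid G] {b : G} {p q : ℕ} (hp : p.Prime)
    (hb : orderOf b = p * q) : b ≠ 1 :=
  fun h1 => hp.ne_one (mul_eq_one.mp (by rw [← hb, h1, orderOf_one])).1

lemma pow_eq_one_of_mem_zpowers {G : Type*} [Group G] {c y : G} {p : ℕ} (hc : orderOf c = p)
    (hy : y ∈ zpowers c) : y ^ p = 1 :=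
  orderOf_dvd_iff_pow_eq_one.mp (hc ▸ orderOf_dvd_of_mem_zpowers hy)

lemma isPGroup_of_pow_mem_zpowers {G : Type*} [Group G] {p : ℕ} {c : G} (hc : orderOf c = p)
    (hpow : ∀ x : G, x ^ p ∈ zpowers c) : IsPGroup p G :=
  fun x => ⟨2, by rw [sq, pow_mul]; exact pow_eq_one_of_mem_zpowers hc (hpow x)⟩

section ZPowers

variable {G : Type*} [Group G] [Finite G]

lemma zpowers_eq_zpowers_of_mem {x y : G} (hxy : x ∈ zpowers y) (h : orderOf x = orderOf y) :
    zpowers x = zpowers y :=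
  eq_of_le_of_card_ge (zpowers_le.mpr hxy) (by rw [Nat.card_zpowers, Nat.card_zpowers, h])

lemma zpowers_lt_zpowers_iff {x y : G} :
    zpowers x < zpowers y ↔ x ∈ zpowers y ∧ orderOf x ≠ orderOf y := by
  rw [lt_iff_le_and_ne, zpowers_le]
  refine and_congr_right fun hxy => ⟨fun hne h => hne (zpowers_eq_zpowers_of_mem hxy h),
    fun hne h => hne ?_⟩
  rw [← Nat.card_zpowers, ← Nat.card_zpowers, h]

lemma exists_prime_orderOf_mem_zpowers {x : G} (hx : x ≠ 1) :
    ∃ y ∈ zpowers x, (orderOf y).Prime := by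
  have hp : (orderOf x).minFac.Prime := Nat.minFac_prime (mt orderOf_eq_one_iff.mp hx)
  refine ⟨x ^ (orderOf x / (orderOf x).minFac), npow_mem_zpowers _ _, ?_⟩
  rwa [orderOf_pow_orderOf_div (orderOf_pos x).ne' (Nat.minFac_dvd _)]

end ZPowers

lemma Subgroup.mem_of_pow_mem_of_coprime {G : Type*} [Group G] {H : Subgroup G} {x : G}
    {m n : ℕ} (hmn : m.Coprime n) (hm : x ^ m ∈ H) (hn : x ^ n ∈ H) : x ∈ H := by
  have bezout := Nat.gcd_eq_gcd_ab m n
  rw [hmn.gcd_eq_one, Nat.cast_one] at bezout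
  have hx : x = (x ^ m) ^ m.gcdA n * (x ^ n) ^ m.gcdB n := by
    rw [← zpow_natCast, ← zpow_natCast, ← zpow_mul, ← zpow_mul, ← zpow_add, ← bezout, zpow_one]
  rw [hx]
  exact mul_mem (zpow_mem hm _) (zpow_mem hn _)

lemma nonempty_mulEquiv_zmod_of_orderOf_eq {G : Type*} [Group G] [Finite G] {b : G} {n : ℕ}
    (hb : orderOf b = n) (hcard : Nat.card G = n) : Nonempty (G ≃* Multiplicative (ZMod n)) := by
  have e := zmodCyclicMulEquiv (isCyclic_of_orderOf_eq_card b (hb.trans hcard.symm))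
  rw [hcard] at e
  exact ⟨e.symm⟩

lemma Subgroup.normal_of_le_center {G : Type*} [Group G] {H : Subgroup G} (h : H ≤ center G) :
    H.Normal :=
  ⟨fun n hn g => by rwa [mem_center_iff.mp (h hn) g, mul_inv_cancel_right]⟩

lemma commutatorElement_mem_of_commute {G : Type*} [Group G] (N : Subgroup G) [N.Normal]
    (h : ∀ a b : G ⧸ N, Commute a b) (x y : G) : ⁅x, y⁆ ∈ N := by
  rw [← QuotientGroup.eq_one_iff, ← QuotientGroup.mk'_apply, map_commutatorElement,
    commutatorElement_eq_one_iff_mul_comm]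
  exact h _ _

lemma MonoidHom.card_le_mul_of_ker_le_of_range_le {G H : Type*} [Group G] [Group H] {f : G →* H}
    {A : Subgroup G} {B : Subgroup H} [Finite A] [Finite B] (hA : f.ker ≤ A) (hB : f.range ≤ B) :
    Nat.card G ≤ Nat.card A * Nat.card B := by
  rw [← f.ker.card_mul_index, index_ker]
  exact Nat.mul_le_mul (card_le_of_le hA) (card_le_of_le hB)

lemma mul_pow_of_mul_eq_mul_mul {G : Type*} [Monoid G] {a b w : G} (hwa : Commute w a)
    (hwb : Commute w b) (hba : b * a = a * b * w) (n : ℕ) :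
    (a * b) ^ n = a ^ n * b ^ n * w ^ n.choose 2 := by
  have hbna (n : ℕ) : b ^ n * a = a * b ^ n * w ^ n := by
    induction n with
    | zero => simp
    | succ n ih =>
      calc b ^ (n + 1) * a = b * a * b ^ n * w ^ n := by
            rw [pow_succ', mul_assoc, ih]; simp only [mul_assoc]
        _ = a * b * (w * b ^ n) * w ^ n := by rw [hba]; simp only [mul_assoc]
        _ = a * b ^ (n + 1) * w ^ (n + 1) := by
          rw [(hwb.pow_right n).eq, pow_succ', pow_succ']; simp only [mul_assoc]
  induction n with
  | zero => simp
  | succ n ih =>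
    have hw : Commute (w ^ n.choose 2) (a * b) := (hwa.pow_left _).mul_right (hwb.pow_left _)
    calc (a * b) ^ (n + 1) = a ^ n * b ^ n * (w ^ n.choose 2 * (a * b)) := by
          rw [pow_succ, ih, mul_assoc]
      _ = a ^ n * (b ^ n * a) * b * w ^ n.choose 2 := by rw [hw.eq]; simp only [mul_assoc]
      _ = a ^ (n + 1) * b ^ n * (w ^ n * b) * w ^ n.choose 2 := by
          rw [hbna, pow_succ]; simp only [mul_assoc]
      _ = a ^ (n + 1) * b ^ (n + 1) * w ^ (n + 1).choose 2 := by
          have hchoose : (n + 1).choose 2 = n + n.choose 2 := by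
            rw [Nat.choose_succ_succ', Nat.choose_one_right]
          rw [(hwb.pow_left n).eq, pow_succ b, hchoose, pow_add w]
          simp only [mul_assoc]

namespace QuaternionGroup

variable {G : Type*} [Group G] {n : ℕ} [NeZero n] {u v : G}

lemma pow_val_eq_zpow (hu : u ^ (2 * n) = 1) {k : ZMod (2 * n)} {m : ℤ}
    (hm : (m : ZMod (2 * n)) = k) : u ^ k.val = u ^ m := by
  rw [← zpow_natCast, zpow_eq_zpow_iff_modEq]
  refine Int.ModEq.of_dvd (Int.natCast_dvd_natCast.mpr (orderOf_dvd_of_pow_eq_one hu)) ?_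
  rw [← ZMod.intCast_eq_intCast_iff, hm]
  simp

def lift (u v : G) (hu : u ^ (2 * n) = 1) (hv : v ^ 2 = u ^ n) (hvu : v * u * v⁻¹ = u⁻¹) :
    QuaternionGroup n →* G where
  toFun
    | a k => u ^ k.val
    | xa k => v * u ^ k.val
  map_one' := by
    show u ^ (0 : ZMod (2 * n)).val = 1
    rw [ZMod.val_zero, pow_zero]
  map_mul' := by
    have hconj (z : ℤ) : u ^ z * v = v * u ^ (-z) := by
      rw [show u ^ z = u⁻¹ ^ (-z) by rw [inv_zpow', neg_neg], ← hvu, conj_zpow]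
      group
    rintro (i | i) (j | j)
    · simp only [a_mul_a]
      rw [pow_val_eq_zpow hu (m := i.val + j.val) (by simp), ← zpow_natCast, ← zpow_natCast,
        ← zpow_add]
    · simp only [a_mul_xa]
      rw [pow_val_eq_zpow hu (m := j.val - i.val) (by simp), ← zpow_natCast, ← zpow_natCast,
        ← mul_assoc, hconj, mul_assoc, ← zpow_add, neg_add_eq_sub]
    · simp only [xa_mul_a]
      rw [pow_val_eq_zpow hu (m := i.val + j.val) (by simp), ← zpow_natCast, ← zpow_natCast,
        mul_assoc, ← zpow_add]
    · simp only [xa_mul_xa]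
      rw [pow_val_eq_zpow hu (m := n + j.val - i.val) (by simp), ← zpow_natCast, ← zpow_natCast,
        mul_assoc, ← mul_assoc (u ^ _), hconj, ← mul_assoc, ← mul_assoc, ← sq, hv, ← zpow_natCast,
        mul_assoc, ← zpow_add, ← zpow_add]
      ring_nf

lemma lift_injective (hu : orderOf u = 2 * n) (hv : v ∉ zpowers u) (hv2 : v ^ 2 = u ^ n)
    (hvu : v * u * v⁻¹ = u⁻¹) :
    Function.Injective (lift u v (hu ▸ pow_orderOf_eq_one u) hv2 hvu) := by
  refine (injective_iff_map_eq_one _).mpr ?_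
  rintro (k | k) hk
  · change u ^ k.val = 1 at hk
    have hk0 : k.val = 0 :=
      Nat.eq_zero_of_dvd_of_lt (hu ▸ orderOf_dvd_of_pow_eq_one hk :) (ZMod.val_lt k)
    rw [(ZMod.val_eq_zero k).mp hk0, a_zero]
  · change v * u ^ k.val = 1 at hk
    exact absurd (eq_inv_of_mul_eq_one_left hk ▸ inv_mem (npow_mem_zpowers u k.val)) hv

end QuaternionGroup

section PowerMapIntoCyclicSubgroup

variable {G : Type*} [Group G] [Finite G] {p : ℕ} {c : G}

lemma mem_center_of_pow_mem_zpowers [hp : Fact p.Prime] (hc : orderOf c = p)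
    (hpow : ∀ x : G, x ^ p ∈ zpowers c) (hroot : ∀ x : G, x ^ p = 1 → x ∈ zpowers c) :
    c ∈ center G := by
  have hG := isPGroup_of_pow_mem_zpowers hc hpow
  have : Nontrivial G := ⟨⟨c, 1, ne_one_of_prime_orderOf (hc ▸ hp.out)⟩⟩
  obtain ⟨n, hn, hcard⟩ := hG.nontrivial_iff_card.mp this
  obtain ⟨k, hk, hcenter⟩ := IsPGroup.card_center_eq_prime_pow hcard hn
  obtain ⟨z, hz⟩ := exists_prime_orderOf_dvd_card' (G := center G) p
    (hcenter ▸ dvd_pow_self p hk.ne')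
  have hzc : (z : G) ∈ zpowers c :=
    hroot _ (orderOf_dvd_iff_pow_eq_one.mp (by rw [Subgroup.orderOf_coe, hz]))
  have hcz : c ∈ zpowers (z : G) :=
    zpowers_eq_zpowers_of_mem hzc (by rw [Subgroup.orderOf_coe, hz, hc]) ▸ mem_zpowers c
  exact zpowers_le.mpr z.2 hcz

lemma card_le_sq_of_pow_mul (hc : orderOf c = p) (hpow : ∀ x : G, x ^ p ∈ zpowers c)
    (hroot : ∀ x : G, x ^ p = 1 → x ∈ zpowers c) (hmul : ∀ x y : G, (x * y) ^ p = x ^ p * y ^ p) :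
    Nat.card G ≤ p ^ 2 := by
  let powHom : G →* G := MonoidHom.mk' (· ^ p) hmul
  have hcard : Nat.card (zpowers c) = p := by rw [Nat.card_zpowers, hc]
  calc Nat.card G ≤ Nat.card (zpowers c) * Nat.card (zpowers c) :=
        powHom.card_le_mul_of_ker_le_of_range_le (fun x hx => hroot x hx)
          (by rintro _ ⟨x, rfl⟩; exact hpow x)
    _ = p ^ 2 := by rw [hcard, sq]

end PowerMapIntoCyclicSubgroup

section OddPrime

variable {G : Type*} [Group G] [Finite G] {p : ℕ} [hp : Fact p.Prime] {c : G}

lemma card_ne_cube_of_ne_two (hp2 : p ≠ 2) (hc : orderOf c = p)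
    (hpow : ∀ x : G, x ^ p ∈ zpowers c) (hroot : ∀ x : G, x ^ p = 1 → x ∈ zpowers c) :
    Nat.card G ≠ p ^ 3 := by
  intro hcard
  have hcent : zpowers c ≤ center G :=
    zpowers_le.mpr (mem_center_of_pow_mem_zpowers hc hpow hroot)
  have := normal_of_le_center hcent
  have hquot : Nat.card (G ⧸ zpowers c) = p ^ 2 := by
    have h := card_eq_card_quotient_mul_card_subgroup (zpowers c)
    rw [hcard, Nat.card_zpowers, hc] at h
    exact Nat.eq_of_mul_eq_mul_right hp.out.pos (by rw [← h]; ring)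
  have hcomm := commutatorElement_mem_of_commute (zpowers c)
    fun a b => (IsPGroup.isMulCommutative_of_card_eq_prime_sq hquot).is_comm.comm a b
  refine (card_le_sq_of_pow_mul hc hpow hroot fun x y => ?_).not_gt
    (hcard ▸ Nat.pow_lt_pow_right hp.out.one_lt (by norm_num))
  have hw := hcomm y⁻¹ x⁻¹
  have hwx : Commute ⁅y⁻¹, x⁻¹⁆ x := (mem_center_iff.mp (hcent hw) x).symm
  have hwy : Commute ⁅y⁻¹, x⁻¹⁆ y := (mem_center_iff.mp (hcent hw) y).symm
  obtain ⟨k, hk⟩ :=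
    hp.out.dvd_choose_self two_ne_zero (lt_of_le_of_ne hp.out.two_le (Ne.symm hp2))
  rw [mul_pow_of_mul_eq_mul_mul hwx hwy (by rw [commutatorElement_def]; group), hk, pow_mul,
    pow_eq_one_of_mem_zpowers hc hw, one_pow, mul_one]

lemma card_le_sq_of_ne_two (hp2 : p ≠ 2) (hc : orderOf c = p)
    (hpow : ∀ x : G, x ^ p ∈ zpowers c) (hroot : ∀ x : G, x ^ p = 1 → x ∈ zpowers c) :
    Nat.card G ≤ p ^ 2 := by
  by_contra! hlt
  obtain ⟨n, hn⟩ := IsPGroup.iff_card.mp (isPGroup_of_pow_mem_zpowers hc hpow)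
  have h3 : p ^ 3 ∣ Nat.card G := hn ▸ pow_dvd_pow p
    ((Nat.pow_lt_pow_iff_right hp.out.one_lt).mp (hn ▸ hlt))
  obtain ⟨K, hK, hcK⟩ := Sylow.exists_subgroup_card_pow_prime_le p h3 (zpowers c)
    (by rw [Nat.card_zpowers, hc, pow_one]) (by norm_num : 1 ≤ 3)
  let c' : K := ⟨c, hcK (mem_zpowers c)⟩
  have hmemK (y : K) : y ∈ zpowers c' ↔ (y : G) ∈ zpowers c := by
    rw [← mem_map_iff_mem K.subtype_injective (K := zpowers c'), MonoidHom.map_zpowers]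
    rfl
  refine card_ne_cube_of_ne_two (c := c') hp2 (by rw [Subgroup.orderOf_mk, hc])
    (fun x => (hmemK _).mpr (hpow x)) (fun x hx => (hmemK _).mpr (hroot _ ?_)) hK
  simpa using congrArg Subtype.val hx

end OddPrime

section TwoGroup

variable {G : Type*} [Group G] {c : G}

lemma eq_one_or_eq_of_mem_zpowers (hc : orderOf c = 2) {x : G} (hx : x ∈ zpowers c) :
    x = 1 ∨ x = c := by
  obtain ⟨k, rfl⟩ := mem_zpowers_iff.mp hx
  rw [← zpow_mod_orderOf, hc]
  rcases Int.emod_two_eq_zero_or_one k with h | h <;> simp [h]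

lemma sq_eq_of_notMem_zpowers (hc : orderOf c = 2) (hpow : ∀ x : G, x ^ 2 ∈ zpowers c)
    (hroot : ∀ x : G, x ^ 2 = 1 → x ∈ zpowers c) {x : G} (hx : x ∉ zpowers c) : x ^ 2 = c :=
  (eq_one_or_eq_of_mem_zpowers hc (hpow x)).resolve_left fun h => hx (hroot x h)

lemma mem_zpowers_of_commute (hc : orderOf c = 2) (hpow : ∀ x : G, x ^ 2 ∈ zpowers c)
    (hroot : ∀ x : G, x ^ 2 = 1 → x ∈ zpowers c) {u g : G} (hu : u ∉ zpowers c)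
    (hug : Commute u g) : g ∈ zpowers u := by
  have hsq {x : G} (hx : x ∉ zpowers c) : x ^ 2 = c := sq_eq_of_notMem_zpowers hc hpow hroot hx
  have hcu : zpowers c ≤ zpowers u := zpowers_le.mpr (hsq hu ▸ npow_mem_zpowers u 2)
  by_cases hg : g ∈ zpowers c
  · exact hcu hg
  by_cases hgu : g * u ∈ zpowers c
  · simpa using mul_mem (hcu hgu) (inv_mem (mem_zpowers u))
  refine absurd (hroot _ ?_) hgu
  rw [hug.symm.mul_pow, hsq hg, hsq hu, ← sq, ← hc, pow_orderOf_eq_one]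

lemma orderOf_eq_four_of_notMem_zpowers (hc : orderOf c = 2)
    (hpow : ∀ x : G, x ^ 2 ∈ zpowers c) (hroot : ∀ x : G, x ^ 2 = 1 → x ∈ zpowers c) {u : G}
    (hu : u ∉ zpowers c) : orderOf u = 4 := by
  have hu2 : u ^ 2 = c := sq_eq_of_notMem_zpowers hc hpow hroot hu
  exact orderOf_eq_prime_pow (p := 2) (n := 1)
    (by rw [pow_one, hu2]; rintro rfl; simp at hc)
    (by rw [pow_two 2, pow_mul, hu2, ← hc, pow_orderOf_eq_one])

lemma card_le_eight [Finite G] (hc : orderOf c = 2) (hpow : ∀ x : G, x ^ 2 ∈ zpowers c)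
    (hroot : ∀ x : G, x ^ 2 = 1 → x ∈ zpowers c) (hcent : zpowers c ≤ center G)
    (hcomm : ∀ x y : G, ⁅x, y⁆ ∈ zpowers c) {u : G} (hu : u ∉ zpowers c) :
    Nat.card G ≤ 8 := by
  let commHom : G →* G := MonoidHom.mk' (fun g => ⁅u, g⁆) fun g h => by
    rw [commutatorElement_mul_right_eq_mul_conj, mul_assoc _ g,
      mem_center_iff.mp (hcent (hcomm u h)) g]
    group
  calc Nat.card G ≤ Nat.card (zpowers u) * Nat.card (zpowers c) :=
        commHom.card_le_mul_of_ker_le_of_range_le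
          (fun g hg => mem_zpowers_of_commute hc hpow hroot hu
            (commutatorElement_eq_one_iff_mul_comm.mp hg))
          (by rintro _ ⟨g, rfl⟩; exact hcomm u g)
    _ = 8 := by
      rw [Nat.card_zpowers, Nat.card_zpowers, orderOf_eq_four_of_notMem_zpowers hc hpow hroot hu,
        hc]

lemma card_le_four_or_nonempty_mulEquiv_quaternionGroup [Finite G] (hc : orderOf c = 2)
    (hpow : ∀ x : G, x ^ 2 ∈ zpowers c) (hroot : ∀ x : G, x ^ 2 = 1 → x ∈ zpowers c) :
    Nat.card G ≤ 2 ^ 2 ∨ Nonempty (G ≃* QuaternionGroup 2) := by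
  have hcent : zpowers c ≤ center G :=
    zpowers_le.mpr (mem_center_of_pow_mem_zpowers hc hpow hroot)
  have := normal_of_le_center hcent
  have hcomm := commutatorElement_mem_of_commute (zpowers c) <| Commute.of_orderOf_dvd_two
    fun q => QuotientGroup.induction_on q fun x => orderOf_dvd_of_pow_eq_one <| by
      rw [← QuotientGroup.mk_pow, QuotientGroup.eq_one_iff]
      exact hpow x
  by_cases habel : ∀ x y : G, Commute x y
  · exact Or.inl (card_le_sq_of_pow_mul hc hpow hroot fun x y => (habel x y).mul_pow 2)
  push Not at habel
  obtain ⟨u, v, huv⟩ := habel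
  have notMem {x y : G} (h : ¬ Commute x y) : x ∉ zpowers c :=
    fun hx => h (mem_center_iff.mp (hcent hx) y).symm
  have hu2 := sq_eq_of_notMem_zpowers hc hpow hroot (notMem huv)
  have hv2 := sq_eq_of_notMem_zpowers hc hpow hroot (notMem fun h => huv h.symm)
  have hu4 : orderOf u = 2 * 2 := orderOf_eq_four_of_notMem_zpowers hc hpow hroot (notMem huv)
  have hcuv : ⁅u, v⁆ = u ^ 2 := hu2 ▸ (eq_one_or_eq_of_mem_zpowers hc (hcomm u v)).resolve_left
    fun h => huv (commutatorElement_eq_one_iff_mul_comm.mp h)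
  have hvu : v * u * v⁻¹ = u⁻¹ := by
    calc v * u * v⁻¹ = ⁅u, v⁆⁻¹ * u := by rw [commutatorElement_def]; group
      _ = u⁻¹ := by rw [hcuv]; group
  have hvmem : v ∉ zpowers u := fun h => huv <| by
    obtain ⟨k, rfl⟩ := mem_zpowers_iff.mp h
    exact (Commute.refl u).zpow_right k
  have hinj := QuaternionGroup.lift_injective hu4 hvmem (hv2.trans hu2.symm) hvu
  refine Or.inr ⟨(MulEquiv.ofBijective _ (hinj.bijective_of_nat_card_le ?_)).symm⟩
  rw [Nat.card_eq_fintype_card (α := QuaternionGroup 2), QuaternionGroup.card]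
  exact card_le_eight hc hpow hroot hcent hcomm (notMem huv)

end TwoGroup

section RedPowGraph

variable {G : Type*} [Group G]

lemma redPowGraph_adj_map_iff {H : Type*} [Group H] (e : G ≃* H) {x y : G} :
    (redPowGraph H).Adj (e x) (e y) ↔ (redPowGraph G).Adj x y := by
  have hmap (z : G) : zpowers (e z) = (zpowers z).map e.toMonoidHom :=
    (e.toMonoidHom.map_zpowers z).symm
  simp only [redPowGraph, hmap, map_lt_map_iff_of_injective (f := e.toMonoidHom) e.injective]

lemma redPowGraph_adj_iff [Finite G] {x y : G} :
    (redPowGraph G).Adj x y ↔ (x ∈ zpowers y ∨ y ∈ zpowers x) ∧ orderOf x ≠ orderOf y := by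
  simp only [redPowGraph, zpowers_lt_zpowers_iff, ne_comm (a := orderOf y)]
  tauto

lemma not_redPowGraph_adj_of_prime [Finite G] {x y : G} (hx : (orderOf x).Prime)
    (hy : (orderOf y).Prime) : ¬ (redPowGraph G).Adj x y := by
  rw [redPowGraph_adj_iff]
  rintro ⟨h | h, hne⟩
  · exact hne ((Nat.prime_dvd_prime_iff_eq hx hy).mp (orderOf_dvd_of_mem_zpowers h))
  · exact hne ((Nat.prime_dvd_prime_iff_eq hy hx).mp (orderOf_dvd_of_mem_zpowers h)).symm

end RedPowGraph

def PrimeOrderBipartite (G : Type*) [Group G] : Prop :=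
  (∃ a : G, (orderOf a).Prime) ∧ (∃ b : G, b ≠ 1 ∧ ¬ (orderOf b).Prime) ∧
    ∀ x y : G, x ≠ 1 → y ≠ 1 →
      ((redPowGraph G).Adj x y ↔ ¬ ((orderOf x).Prime ↔ (orderOf y).Prime))

theorem isCompleteKPartite_two_iff {G : Type*} [Group G] [Finite G] :
    IsCompleteKPartite (properRedPowGraph G) 2 ↔ PrimeOrderBipartite G := by
  have fin_two : ∀ i j k : Fin 2, i ≠ j ↔ ¬ (i = k ↔ j = k) := by decide
  constructor
  · rintro ⟨P, hsurj, hP⟩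
    have same_part (u v : {x : G // x ≠ 1}) (hu : (orderOf (u : G)).Prime)
        (hv : (orderOf (v : G)).Prime) : P u = P v :=
      not_not.mp fun hne => not_redPowGraph_adj_of_prime hu hv ((hP u v).mpr hne)
    obtain ⟨u, -⟩ := hsurj 0
    obtain ⟨a, -, ha⟩ := exists_prime_orderOf_mem_zpowers u.2
    let A : {x : G // x ≠ 1} := ⟨a, ne_one_of_prime_orderOf ha⟩
    have part_iff (v : {x : G // x ≠ 1}) : P v = P A ↔ (orderOf (v : G)).Prime := by
      refine ⟨fun hv => by_contra fun hnp => ?_, fun hv => same_part v A hv ha⟩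
      obtain ⟨y, hy, hyp⟩ := exists_prime_orderOf_mem_zpowers v.2
      let Y : {x : G // x ≠ 1} := ⟨y, ne_one_of_prime_orderOf hyp⟩
      have hadj : (redPowGraph G).Adj y v :=
        redPowGraph_adj_iff.mpr ⟨Or.inl hy, fun h => hnp (h ▸ hyp)⟩
      exact (hP Y v).mp hadj ((same_part Y A hyp ha).trans hv.symm)
    obtain ⟨b, hb⟩ := hsurj (P A + 1)
    refine ⟨⟨a, ha⟩, ⟨b, b.2, fun hbp => ?_⟩, fun x y hx hy => ?_⟩
    · have := (part_iff b).mpr hbp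
      rw [hb] at this
      omega
    · rw [← part_iff ⟨x, hx⟩, ← part_iff ⟨y, hy⟩, ← fin_two]
      exact hP ⟨x, hx⟩ ⟨y, hy⟩
  · rintro ⟨⟨a, ha⟩, ⟨b, hb, hbp⟩, hadj⟩
    classical
    refine ⟨fun v => if (orderOf (v : G)).Prime then 0 else 1, fun i => ?_, fun u v => ?_⟩
    · fin_cases i
      exacts [⟨⟨a, ne_one_of_prime_orderOf ha⟩, by simp [ha]⟩, ⟨⟨b, hb⟩, by simp [hbp]⟩]
    · rw [fin_two _ _ 0]
      simpa [properRedPowGraph] using hadj u v u.2 v.2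

lemma PrimeOrderBipartite.of_mulEquiv {G H : Type*} [Group G] [Group H] (e : G ≃* H)
    (h : PrimeOrderBipartite H) : PrimeOrderBipartite G := by
  obtain ⟨⟨a, ha⟩, ⟨b, hb, hbp⟩, hadj⟩ := h
  refine ⟨⟨e.symm a, ?_⟩, ⟨e.symm b, by simpa using hb, ?_⟩, fun x y hx hy => ?_⟩
  · rwa [MulEquiv.orderOf_eq]
  · rwa [MulEquiv.orderOf_eq]
  · simpa [redPowGraph_adj_map_iff, MulEquiv.orderOf_eq] using hadj (e x) (e y)
      (by simpa using hx) (by simpa using hy)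

lemma PrimeOrderBipartite.of_mem_zpowers_of_orderOf_eq {G : Type*} [Group G] [Finite G]
    (ha : ∃ a : G, (orderOf a).Prime) (hb : ∃ b : G, b ≠ 1 ∧ ¬ (orderOf b).Prime)
    (hmem : ∀ x y : G, (orderOf x).Prime → y ≠ 1 → ¬ (orderOf y).Prime → x ∈ zpowers y)
    (horder : ∀ x y : G, x ≠ 1 → y ≠ 1 → ¬ (orderOf x).Prime → ¬ (orderOf y).Prime →
      orderOf x = orderOf y) :
    PrimeOrderBipartite G := by
  refine ⟨ha, hb, fun x y hx hy => ?_⟩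
  by_cases hxp : (orderOf x).Prime <;> by_cases hyp : (orderOf y).Prime
  · simpa [hxp, hyp] using not_redPowGraph_adj_of_prime hxp hyp
  · simpa [hxp, hyp, redPowGraph_adj_iff] using
      ⟨Or.inl (hmem x y hxp hy hyp), fun h => hyp (h ▸ hxp)⟩
  · simpa [hxp, hyp, redPowGraph_adj_iff] using
      ⟨Or.inr (hmem y x hyp hx hxp), fun h => hxp (h ▸ hyp)⟩
  · simp [hyp, redPowGraph_adj_iff, horder x y hx hy hxp hyp]

lemma primeOrderBipartite_of_isCyclic {C : Type*} [Group C] [Finite C] [IsCyclic C] {p q : ℕ}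
    (hp : p.Prime) (hq : q.Prime) (hcard : Nat.card C = p * q) : PrimeOrderBipartite C := by
  have orderOf_eq (x : C) (hx : x ≠ 1) (hxp : ¬ (orderOf x).Prime) : orderOf x = p * q := by
    obtain ⟨k, l, hk, hl, hkl⟩ := Nat.dvd_mul.mp (hcard ▸ orderOf_dvd_natCard x)
    rcases hp.eq_one_or_self_of_dvd k hk with rfl | rfl <;>
      rcases hq.eq_one_or_self_of_dvd l hl with rfl | rfl
    · exact absurd (orderOf_eq_one_iff.mp (by simpa using hkl.symm)) hx
    · exact absurd (by simpa [← hkl] using hq) hxp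
    · exact absurd (by simpa [← hkl] using hp) hxp
    · exact hkl.symm
  obtain ⟨g, hg⟩ := IsCyclic.exists_ofOrder_eq_natCard (α := C)
  have : Fact p.Prime := ⟨hp⟩
  refine .of_mem_zpowers_of_orderOf_eq ?_ ⟨g, ?_, ?_⟩ (fun x y _ hy hyp => ?_)
    (fun x y hx hy hxp hyp => ?_)
  · obtain ⟨a, ha⟩ := exists_prime_orderOf_dvd_card' (G := C) p (hcard ▸ dvd_mul_right p q)
    exact ⟨a, ha ▸ hp⟩
  · rintro rfl
    rw [orderOf_one, hcard] at hg
    exact hp.ne_one (mul_eq_one.mp hg.symm).1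
  · rw [hg, hcard]
    exact Nat.not_prime_mul hp.ne_one hq.ne_one
  · have htop : zpowers y = ⊤ := eq_top_of_card_eq _ (by
      rw [Nat.card_zpowers, orderOf_eq y hy hyp, hcard])
    exact htop ▸ mem_top x
  · rw [orderOf_eq x hx hxp, orderOf_eq y hy hyp]

lemma primeOrderBipartite_quaternionGroup_two : PrimeOrderBipartite (QuaternionGroup 2) := by
  have pow_four (x : QuaternionGroup 2) : x ^ 4 = 1 := by revert x; decide
  have sq_eq_one (x : QuaternionGroup 2) : x ^ 2 = 1 → x = 1 ∨ x = .a 2 := by revert x; decide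
  have orderOf_eq (x : QuaternionGroup 2) (hx : x ≠ 1) (hxp : ¬ (orderOf x).Prime) :
      orderOf x = 4 := by
    obtain ⟨k, hk, hxk⟩ := (Nat.dvd_prime_pow Nat.prime_two).mp
      (orderOf_dvd_of_pow_eq_one (pow_four x) : orderOf x ∣ 2 ^ 2)
    interval_cases k
    · exact absurd (orderOf_eq_one_iff.mp hxk) hx
    · exact absurd (hxk ▸ Nat.prime_two) hxp
    · exact hxk
  refine .of_mem_zpowers_of_orderOf_eq ⟨.a 2, ?_⟩ ⟨.xa 0, by decide, ?_⟩ (fun x y hx hy hyp => ?_)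
    (fun x y hx hy hxp hyp => by rw [orderOf_eq x hx hxp, orderOf_eq y hy hyp])
  · rw [orderOf_eq_prime (p := 2) (by decide) (by decide)]
    exact Nat.prime_two
  · rw [QuaternionGroup.orderOf_xa]
    decide
  · have hx2 : orderOf x = 2 := (Nat.prime_dvd_prime_iff_eq hx Nat.prime_two).mp
      (hx.dvd_of_dvd_pow (orderOf_dvd_of_pow_eq_one (pow_four x) : orderOf x ∣ 2 ^ 2))
    have hxa : x = .a 2 := (sq_eq_one x (orderOf_dvd_iff_pow_eq_one.mp (by rw [hx2])))
      |>.resolve_left fun h => by simp [h] at hx2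
    have hya : y ^ 2 = .a 2 := (sq_eq_one (y ^ 2) (by rw [← pow_mul]; exact pow_four y))
      |>.resolve_left fun h => by simpa [orderOf_eq y hy hyp] using orderOf_dvd_of_pow_eq_one h
    rw [hxa, ← hya]
    exact npow_mem_zpowers y 2

namespace PrimeOrderBipartite

variable {G : Type*} [Group G] [Finite G]

lemma mem_zpowers_of_prime (h : PrimeOrderBipartite G) {x y : G} (hx : (orderOf x).Prime)
    (hy : y ≠ 1) (hyp : ¬ (orderOf y).Prime) : x ∈ zpowers y := by
  obtain ⟨hmem | hmem, -⟩ := redPowGraph_adj_iff.mp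
    ((h.2.2 x y (ne_one_of_prime_orderOf hx) hy).mpr (by tauto))
  · exact hmem
  · rcases hx.eq_one_or_self_of_dvd _ (orderOf_dvd_of_mem_zpowers hmem) with h1 | h1
    · exact absurd (orderOf_eq_one_iff.mp h1) hy
    · exact absurd (h1 ▸ hx) hyp

lemma orderOf_eq_of_mem_zpowers (h : PrimeOrderBipartite G) {x y : G} (hx : x ≠ 1)
    (hxp : ¬ (orderOf x).Prime) (hy : y ≠ 1) (hyp : ¬ (orderOf y).Prime) (hxy : x ∈ zpowers y) :
    orderOf x = orderOf y :=
  not_not.mp fun hne => (h.2.2 x y hx hy).mp (redPowGraph_adj_iff.mpr ⟨Or.inl hxy, hne⟩)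
    (iff_of_false hxp hyp)

lemma exists_orderOf_eq_prime_mul (h : PrimeOrderBipartite G) {x : G} (hx : x ≠ 1)
    (hxp : ¬ (orderOf x).Prime) : ∃ r s : ℕ, r.Prime ∧ s.Prime ∧ orderOf x = r * s := by
  set n := orderOf x with hn
  have hn0 : n ≠ 0 := (orderOf_pos x).ne'
  have hr : n.minFac.Prime := Nat.minFac_prime (mt orderOf_eq_one_iff.mp hx)
  have hpow : orderOf (x ^ n.minFac) = n / n.minFac := orderOf_pow_of_dvd hr.ne_zero n.minFac_dvd
  refine ⟨n.minFac, n / n.minFac, hr, by_contra fun hsp => ?_,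
    (Nat.mul_div_cancel' n.minFac_dvd).symm⟩
  have hs1 : n / n.minFac ≠ 1 := fun hs => hxp <| by
    rw [Nat.div_eq_iff_eq_mul_left hr.pos n.minFac_dvd, one_mul] at hs
    exact (congrArg Nat.Prime hs).mpr hr
  have hy : x ^ n.minFac ≠ 1 := fun hy => hs1 (by rw [← hpow, hy, orderOf_one])
  have := h.orderOf_eq_of_mem_zpowers hy (hpow ▸ hsp) hx hxp (npow_mem_zpowers x _)
  rw [hpow] at this
  exact (Nat.div_lt_self (Nat.pos_of_ne_zero hn0) hr.one_lt).ne this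

lemma mem_zpowers_of_orderOf_eq_mul (h : PrimeOrderBipartite G) {x y : G} {p q : ℕ}
    (hx : (orderOf x).Prime) (hp : p.Prime) (hq : q.Prime) (hy : orderOf y = p * q) :
    x ∈ zpowers y :=
  h.mem_zpowers_of_prime hx (ne_one_of_orderOf_eq_prime_mul hp hy)
    (hy ▸ Nat.not_prime_mul hp.ne_one hq.ne_one)

lemma zpowers_eq_top (h : PrimeOrderBipartite G) {b : G} {p q : ℕ} (hp : p.Prime) (hq : q.Prime)
    (hpq : p ≠ q) (hb : orderOf b = p * q) : zpowers b = ⊤ := by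
  have hbp : ¬ (orderOf b).Prime := hb ▸ Nat.not_prime_mul hp.ne_one hq.ne_one
  have hb1 : b ≠ 1 := ne_one_of_orderOf_eq_prime_mul hp hb
  refine eq_top_iff.mpr fun x _ => ?_
  by_cases hx : x = 1
  · exact hx ▸ one_mem _
  by_cases hxp : (orderOf x).Prime
  · exact h.mem_zpowers_of_prime hxp hb1 hbp
  have hbx : b ∈ zpowers x := mem_of_pow_mem_of_coprime ((Nat.coprime_primes hp hq).mpr hpq)
    (h.mem_zpowers_of_prime
      (by rwa [orderOf_pow_of_orderOf_eq_mul hp.ne_zero (mul_comm p q ▸ hb)]) hx hxp)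
    (h.mem_zpowers_of_prime (by rwa [orderOf_pow_of_orderOf_eq_mul hq.ne_zero hb]) hx hxp)
  have hcard : Nat.card (zpowers x) ≤ Nat.card (zpowers b) := by
    rw [Nat.card_zpowers, Nat.card_zpowers, h.orderOf_eq_of_mem_zpowers hb1 hbp hx hxp hbx]
  exact eq_of_le_of_card_ge (zpowers_le.mpr hbx) hcard ▸ mem_zpowers x

lemma orderOf_dvd_sq (h : PrimeOrderBipartite G) {b : G} {p : ℕ} (hp : p.Prime)
    (hb : orderOf b = p * p) (x : G) : orderOf x ∣ p ^ 2 := by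
  have prime_order {y : G} (hy : (orderOf y).Prime) : orderOf y = p :=
    (Nat.prime_dvd_prime_iff_eq hy hp).mp <| hy.dvd_of_dvd_pow (n := 2) <| by
      rw [sq, ← hb]; exact orderOf_dvd_of_mem_zpowers (h.mem_zpowers_of_orderOf_eq_mul hy hp hp hb)
  by_cases hx : x = 1
  · simp [hx]
  by_cases hxp : (orderOf x).Prime
  · rw [prime_order hxp]; exact dvd_pow_self p two_ne_zero
  obtain ⟨r, s, hr, hs, hrs⟩ := h.exists_orderOf_eq_prime_mul hx hxp
  have hr' := orderOf_pow_of_orderOf_eq_mul hs.ne_zero hrs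
  have hs' := orderOf_pow_of_orderOf_eq_mul hr.ne_zero (mul_comm r s ▸ hrs)
  have hrp : r = p := hr' ▸ prime_order (by rwa [hr'])
  have hsp : s = p := hs' ▸ prime_order (by rwa [hs'])
  rw [hrs, hrp, hsp, sq]

lemma mem_zpowers_pow_of_pow_eq_one (h : PrimeOrderBipartite G) {b : G} {p : ℕ} (hp : p.Prime)
    (hb : orderOf b = p * p) {x : G} (hx : x ^ p = 1) : x ∈ zpowers (b ^ p) := by
  have : Fact p.Prime := ⟨hp⟩
  by_cases hx1 : x = 1
  · exact hx1 ▸ one_mem _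
  obtain ⟨k, rfl⟩ := mem_zpowers_iff.mp
    (h.mem_zpowers_of_orderOf_eq_mul ((orderOf_eq_prime hx hx1).symm ▸ hp) hp hp hb)
  have hdvd : ((p * p : ℕ) : ℤ) ∣ k * p := by
    rw [← hb, orderOf_dvd_iff_zpow_eq_one, zpow_mul, zpow_natCast, hx]
  obtain ⟨m, rfl⟩ : (p : ℤ) ∣ k := by
    push_cast at hdvd
    exact (mul_dvd_mul_iff_right (by exact_mod_cast hp.ne_zero)).mp hdvd
  exact ⟨m, by simp only [zpow_mul, zpow_natCast]⟩

theorem nonempty_mulEquiv (h : PrimeOrderBipartite G) :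
    (∃ p : ℕ, p.Prime ∧ Nonempty (G ≃* Multiplicative (ZMod (p ^ 2)))) ∨
    (∃ p q : ℕ, p.Prime ∧ q.Prime ∧ p ≠ q ∧ Nonempty (G ≃* Multiplicative (ZMod (p * q)))) ∨
    Nonempty (G ≃* QuaternionGroup 2) := by
  obtain ⟨b, hb1, hbp⟩ := h.2.1
  obtain ⟨p, q, hp, hq, hb⟩ := h.exists_orderOf_eq_prime_mul hb1 hbp
  rcases eq_or_ne p q with rfl | hpq
  · have : Fact p.Prime := ⟨hp⟩
    have hc : orderOf (b ^ p) = p := orderOf_pow_of_orderOf_eq_mul hp.ne_zero hb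
    have hroot (x : G) : x ^ p = 1 → x ∈ zpowers (b ^ p) := h.mem_zpowers_pow_of_pow_eq_one hp hb
    have hpow (x : G) : x ^ p ∈ zpowers (b ^ p) := hroot _ <| by
      rw [← pow_mul, ← sq]; exact orderOf_dvd_iff_pow_eq_one.mp (h.orderOf_dvd_sq hp hb x)
    have cyclic (hcard : Nat.card G ≤ p ^ 2) : Nonempty (G ≃* Multiplicative (ZMod (p ^ 2))) :=
      nonempty_mulEquiv_zmod_of_orderOf_eq (hb.trans (sq p).symm) <| le_antisymm hcard <|
        sq p ▸ hb ▸ Nat.le_of_dvd Nat.card_pos (orderOf_dvd_natCard b)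
    rcases eq_or_ne p 2 with rfl | hp2
    · exact (card_le_four_or_nonempty_mulEquiv_quaternionGroup hc hpow hroot).imp
        (fun hcard => ⟨2, hp, cyclic hcard⟩) Or.inr
    · exact Or.inl ⟨p, hp, cyclic (card_le_sq_of_ne_two hp2 hc hpow hroot)⟩
  · have hcard : Nat.card G = p * q := by
      rw [← hb, ← Nat.card_zpowers, h.zpowers_eq_top hp hq hpq hb, card_top]
    exact Or.inr (Or.inl ⟨p, q, hp, hq, hpq, nonempty_mulEquiv_zmod_of_orderOf_eq hb hcard⟩)

end PrimeOrderBipartite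

/-- RP*(G) is complete bipartite iff G ≅ ℤ_{p²}, ℤ_{pq} or Q₈. -/
theorem stmt4 {G : Type*} [Group G] [Fintype G] :
    IsCompleteKPartite (properRedPowGraph G) 2 ↔
      ((∃ p : ℕ, p.Prime ∧ Nonempty (G ≃* Multiplicative (ZMod (p ^ 2)))) ∨
       (∃ p q : ℕ, p.Prime ∧ q.Prime ∧ p ≠ q ∧
          Nonempty (G ≃* Multiplicative (ZMod (p * q)))) ∨
       Nonempty (G ≃* QuaternionGroup 2)) := by
  rw [isCompleteKPartite_two_iff]
  refine ⟨PrimeOrderBipartite.nonempty_mulEquiv, ?_⟩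
  rintro (⟨p, hp, ⟨e⟩⟩ | ⟨p, q, hp, hq, -, ⟨e⟩⟩ | ⟨⟨e⟩⟩)
  · have : NeZero (p ^ 2) := ⟨pow_ne_zero 2 hp.ne_zero⟩
    exact .of_mulEquiv e (primeOrderBipartite_of_isCyclic hp hp ((Nat.card_zmod _).trans (sq p)))
  · have : NeZero (p * q) := ⟨mul_ne_zero hp.ne_zero hq.ne_zero⟩
    exact .of_mulEquiv e (primeOrderBipartite_of_isCyclic hp hq (Nat.card_zmod _))
  · exact .of_mulEquiv e primeOrderBipartite_quaternionGroup_two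
end

section
/- For a prime p and integer k ≥ 2, the proper reduced power graph RP*(ℤ_{p^k}) is isomorphic to the complete k-partite graph K_{p−1, p(p−1), ..., p^{k−1}(p−1)}. -/
/-!
In a cyclic group of order `p ^ k` an element `x` lies in `⟨y⟩` iff `orderOf x ∣ orderOf y`, and
the orders are powers of `p`, so the cyclic subgroups form a chain indexed by the order. Hence two
non-identity elements are adjacent in `RP*` exactly when their orders differ: the graph is complete
multipartite, its parts are the sets of elements of order `p ^ i` for `1 ≤ i ≤ k`, and such a part
has `φ (p ^ i) = p ^ (i - 1) * (p - 1)` elements.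
-/

open SimpleGraph

/-- The complete multipartite graph on a family of vertex sets: vertices in different parts are
adjacent, vertices in the same part are not. -/
def completeMultipartiteGraph' {ι : Type*} (V : ι → Type*) : SimpleGraph (Σ i, V i) where
  Adj u v := u.1 ≠ v.1
  symm := ⟨fun u v h => h.symm⟩
  loopless := ⟨fun u h => h rfl⟩

theorem nonempty_iso_completeMultipartiteGraph'_of_adj_iff {V ι : Type*} [Finite V]
    (G : SimpleGraph V) (f : V → ι) (n : ι → ℕ) (hadj : ∀ x y, G.Adj x y ↔ f x ≠ f y)
    (hcard : ∀ i, Nat.card {x // f x = i} = n i) :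
    Nonempty (G ≃g completeMultipartiteGraph' fun i => Fin (n i)) :=
  ⟨⟨(Equiv.sigmaFiberEquiv f).symm.trans
      (Equiv.sigmaCongrRight fun i => Finite.equivFinOfCardEq (hcard i)),
    fun {x y} => (hadj x y).symm⟩⟩

namespace IsCyclic

variable {G : Type*} [Group G] [Finite G] [IsCyclic G]

theorem mem_zpowers_of_orderOf_dvd {u v : G} (h : orderOf u ∣ orderOf v) :
    u ∈ Subgroup.zpowers v := by
  classical
  have := Fintype.ofFinite G
  let roots : Finset G := {x | x ^ orderOf v = 1}
  have hsub : (Subgroup.zpowers v : Set G).toFinset ⊆ roots := fun x hx => by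
    simpa [roots, ← orderOf_dvd_iff_pow_eq_one] using
      orderOf_dvd_of_mem_zpowers (Set.mem_toFinset.1 hx)
  -- `zpowers v` already has `orderOf v` elements, as many as `roots` can have at most.
  have heq : (Subgroup.zpowers v : Set G).toFinset = roots :=
    Finset.eq_of_subset_of_card_le hsub <| by
      rw [← Nat.card_eq_card_toFinset, SetLike.coe_sort_coe, Nat.card_zpowers]
      exact card_pow_eq_one_le (orderOf_pos v)
  have hu : u ∈ roots := by simpa [roots] using orderOf_dvd_iff_pow_eq_one.1 h
  simpa [← heq] using hu

theorem zpowers_le_zpowers_iff {u v : G} :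
    Subgroup.zpowers u ≤ Subgroup.zpowers v ↔ orderOf u ∣ orderOf v :=
  ⟨fun h => orderOf_dvd_of_mem_zpowers (h (Subgroup.mem_zpowers u)),
    fun h => Subgroup.zpowers_le.2 (mem_zpowers_of_orderOf_dvd h)⟩

end IsCyclic

section PrimePowerCard

variable {G : Type*} [Group G] {p n : ℕ}

theorem orderOf_eq_pow_log (hp : p.Prime) (hG : Nat.card G = p ^ n) (x : G) :
    orderOf x = p ^ Nat.log p (orderOf x) := by
  obtain ⟨m, -, hm⟩ := (Nat.dvd_prime_pow hp).1 (hG ▸ orderOf_dvd_natCard x)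
  rw [hm, Nat.log_pow hp.one_lt]

theorem orderOf_eq_pow_iff (hp : p.Prime) (hG : Nat.card G = p ^ n) {x : G} {m : ℕ} :
    orderOf x = p ^ m ↔ Nat.log p (orderOf x) = m := by
  rw [orderOf_eq_pow_log hp hG x, Nat.pow_right_inj hp.one_lt, Nat.log_pow hp.one_lt]

theorem log_orderOf_eq_zero_iff (hp : p.Prime) (hG : Nat.card G = p ^ n) {x : G} :
    Nat.log p (orderOf x) = 0 ↔ x = 1 := by
  rw [← orderOf_eq_pow_iff hp hG, pow_zero, orderOf_eq_one_iff]

theorem log_orderOf_le (hp : p.Prime) (hG : Nat.card G = p ^ n) (x : G) :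
    Nat.log p (orderOf x) ≤ n := by
  rw [← Nat.pow_dvd_pow_iff_le_right hp.one_lt, ← orderOf_eq_pow_log hp hG, ← hG]
  exact orderOf_dvd_natCard x

variable [IsCyclic G]

theorem zpowers_le_zpowers_iff_log_orderOf_le (hp : p.Prime) (hG : Nat.card G = p ^ n) {u v : G} :
    Subgroup.zpowers u ≤ Subgroup.zpowers v ↔
      Nat.log p (orderOf u) ≤ Nat.log p (orderOf v) := by
  have : Finite G := Nat.finite_of_card_ne_zero (hG ▸ pow_ne_zero n hp.ne_zero)
  rw [IsCyclic.zpowers_le_zpowers_iff, orderOf_eq_pow_log hp hG u, orderOf_eq_pow_log hp hG v,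
    Nat.pow_dvd_pow_iff_le_right hp.one_lt, Nat.log_pow hp.one_lt, Nat.log_pow hp.one_lt]

theorem redPowGraph_adj_iff_log_orderOf_ne (hp : p.Prime) (hG : Nat.card G = p ^ n) {u v : G} :
    (redPowGraph G).Adj u v ↔ Nat.log p (orderOf u) ≠ Nat.log p (orderOf v) := by
  change _ < _ ∨ _ < _ ↔ _
  simp only [lt_iff_le_not_ge, zpowers_le_zpowers_iff_log_orderOf_le hp hG]
  omega

theorem card_log_orderOf_eq (hp : p.Prime) (hG : Nat.card G = p ^ n) {m : ℕ} (hm : m ≤ n) :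
    Nat.card {x : G // Nat.log p (orderOf x) = m} = Nat.totient (p ^ m) := by
  classical
  have : Finite G := Nat.finite_of_card_ne_zero (hG ▸ pow_ne_zero n hp.ne_zero)
  have := Fintype.ofFinite G
  simp_rw [← orderOf_eq_pow_iff hp hG]
  rw [Nat.card_eq_fintype_card, Fintype.card_subtype]
  apply IsCyclic.card_orderOf_eq_totient
  rw [← Nat.card_eq_fintype_card, hG]
  exact pow_dvd_pow p hm

end PrimePowerCard

theorem stmt6_general (p k : ℕ) (hp : p.Prime) :
    Nonempty ((properRedPowGraph (Multiplicative (ZMod (p ^ k)))) ≃g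
      completeMultipartiteGraph' (fun i : Fin k => Fin (p ^ (i : ℕ) * (p - 1)))) := by
  have : NeZero (p ^ k) := ⟨pow_ne_zero k hp.ne_zero⟩
  set G := Multiplicative (ZMod (p ^ k))
  have hG : Nat.card G = p ^ k := by simp [G]
  have hpos (x : {x : G // x ≠ 1}) : 0 < Nat.log p (orderOf x.1) :=
    Nat.pos_of_ne_zero fun h => x.2 ((log_orderOf_eq_zero_iff hp hG).1 h)
  -- the elements of order `p ^ (i + 1)` form the part indexed by `i`
  let part (x : {x : G // x ≠ 1}) : Fin k :=
    ⟨Nat.log p (orderOf x.1) - 1, by have := log_orderOf_le hp hG x.1; have := hpos x; omega⟩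
  refine nonempty_iso_completeMultipartiteGraph'_of_adj_iff _ part _ (fun x y => ?_) fun i => ?_
  · have := hpos x; have := hpos y
    rw [Ne, Fin.ext_iff]
    exact (redPowGraph_adj_iff_log_orderOf_ne hp hG).trans (by simp only [part]; omega)
  · rw [← Nat.totient_prime_pow_succ hp, ← card_log_orderOf_eq hp hG (m := i + 1) i.2]
    refine Nat.card_congr ((Equiv.subtypeEquivRight fun x => ?_).trans
      (Equiv.subtypeSubtypeEquivSubtype fun {x} h => ?_))
    · have := hpos x
      rw [Fin.ext_iff]
      simp only [part]
      omega
    · rw [Ne, ← log_orderOf_eq_zero_iff hp hG, h]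
      omega

/-- For a prime p and k ≥ 2,
RP*(ℤ_{p^k}) ≅ K_{p−1, p(p−1), …, p^{k−1}(p−1)}. -/
theorem stmt6 (p k : ℕ) (hp : p.Prime) (hk : 2 ≤ k) :
    Nonempty ((properRedPowGraph (Multiplicative (ZMod (p ^ k)))) ≃g
      completeMultipartiteGraph' (fun i : Fin k => Fin (p ^ (i : ℕ) * (p - 1)))) :=
  stmt6_general p k hp
end

section
/- For every finite group G, the reduced power graph RP(G) is a perfect graph. -/
open SimpleGraph

/-- A graph is perfect if for every induced subgraph the chromatic number equals
the clique number. -/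
def IsPerfect {V : Type*} (Γ : SimpleGraph V) : Prop :=
  ∀ s : Set V, (Γ.induce s).chromaticNumber = ((Γ.induce s).cliqueNum : ℕ∞)

/-!
Every induced subgraph of `RP(G)` is the comparability graph of the preorder `u ≤ v ↔ ⟨u⟩ ≤ ⟨v⟩`
on its vertices. In a finite preorder, colouring each element by its height is proper, since
comparable elements have different heights, and an element of height `h` tops a chain of
`h + 1` elements, which is a clique. Hence `χ ≤ ω`, while `ω ≤ χ` always holds.
-/

lemma Order.height_lt_top_of_finite {V : Type*} [Preorder V] [Finite V] (v : V) :
    Order.height v < ⊤ := by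
  cases nonempty_fintype V
  have : Order.height v ≤ Fintype.card V :=
    Order.height_le fun p _ => mod_cast p.length_lt_card.le
  exact this.trans_lt (ENat.natCast_lt_top _)

namespace SimpleGraph

variable {V : Type*} [Preorder V] {Γ : SimpleGraph V}

lemma isClique_range_ltSeries (hΓ : ∀ u v, Γ.Adj u v ↔ u < v ∨ v < u) (p : LTSeries V) :
    Γ.IsClique (Set.range p) := by
  rintro _ ⟨i, rfl⟩ _ ⟨j, rfl⟩ hne
  rcases lt_trichotomy i j with hij | rfl | hji
  · exact (hΓ _ _).2 (.inl (p.strictMono hij))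
  · exact absurd rfl hne
  · exact (hΓ _ _).2 (.inr (p.strictMono hji))

variable [Finite V]

lemma height_toNat_lt_cliqueNum (hΓ : ∀ u v, Γ.Adj u v ↔ u < v ∨ v < u) (v : V) :
    (Order.height v).toNat < Γ.cliqueNum := by
  classical
  obtain ⟨p, -, hlen⟩ := Order.exists_series_of_height_eq_coe v
    (ENat.natCast_toNat (Order.height_lt_top_of_finite v).ne).symm
  have hclique : Γ.IsClique (Finset.univ.image p : Set V) := by
    simpa using isClique_range_ltSeries hΓ p
  have hcard : (Finset.univ.image p).card = p.length + 1 := by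
    rw [Finset.card_image_of_injective _ p.strictMono.injective, Finset.card_univ,
      Fintype.card_fin]
  have := hclique.card_le_cliqueNum
  omega

lemma colorable_cliqueNum (hΓ : ∀ u v, Γ.Adj u v ↔ u < v ∨ v < u) :
    Γ.Colorable Γ.cliqueNum := by
  refine ⟨Coloring.mk (fun v => ⟨_, height_toNat_lt_cliqueNum hΓ v⟩) fun {u v} huv hcol => ?_⟩
  have hheight : Order.height u = Order.height v := by
    rw [← ENat.natCast_toNat (Order.height_lt_top_of_finite u).ne,
      ← ENat.natCast_toNat (Order.height_lt_top_of_finite v).ne, Fin.mk.inj_iff.1 hcol]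
  rcases (hΓ u v).1 huv with h | h
  · exact (Order.height_strictMono h (Order.height_lt_top_of_finite u)).ne hheight
  · exact (Order.height_strictMono h (Order.height_lt_top_of_finite v)).ne hheight.symm

theorem chromaticNumber_eq_cliqueNum_of_adj_iff (hΓ : ∀ u v, Γ.Adj u v ↔ u < v ∨ v < u) :
    Γ.chromaticNumber = Γ.cliqueNum :=
  le_antisymm (colorable_cliqueNum hΓ).chromaticNumber_le cliqueNum_le_chromaticNumber

end SimpleGraph

/-- For every finite group G, RP(G) is perfect. -/
theorem stmt9 {G : Type*} [Group G] [Fintype G] : IsPerfect (redPowGraph G) := by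
  intro s
  let _ : Preorder s := Preorder.lift fun v => Subgroup.zpowers (v : G)
  exact chromaticNumber_eq_cliqueNum_of_adj_iff fun _ _ => Iff.rfl
end

section
/- Let G be a finite group. Then RP*(G) is acyclic (contains no cycle) if and only if every element order of G lies in {1, 4} ∪ {primes}. -/
open SimpleGraph

namespace SimpleGraph

variable {V : Type*} {G : SimpleGraph V}

lemma not_isAcyclic_of_square {a b c d : V} (hab : G.Adj a b) (hbc : G.Adj b c)
    (hcd : G.Adj c d) (hda : G.Adj d a) (hac : a ≠ c) (hbd : b ≠ d) : ¬ G.IsAcyclic := by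
  intro hG
  refine hG (.cons hab (.cons hbc (.cons hcd (.cons hda .nil)))) ?_
  simp [Walk.cons_isCycle_iff, hab.ne, hbc.ne, hcd.ne, hda.ne, hab.ne.symm, hda.ne.symm, hac,
    hac.symm, hbd]

lemma isBridge_of_forall_adj_eq {u v : V} (huv : u ≠ v) (h : ∀ w, G.Adj u w → w = v) :
    G.IsBridge s(u, v) := by
  rintro ⟨p⟩
  cases p with
  | nil => exact huv rfl
  | cons hadj _ =>
    rw [deleteEdges_adj] at hadj
    exact hadj.2 (by rw [h _ hadj.1]; rfl)

end SimpleGraph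

lemma Nat.exists_dvd_two_lt_lt_of_not_prime {n : ℕ} (h0 : n ≠ 0) (h1 : n ≠ 1) (h4 : n ≠ 4) (hn : ¬ n.Prime) :
    ∃ m, m ∣ n ∧ 2 < m ∧ m < n := by
  obtain ⟨m, hmn, hm2, hm⟩ := Nat.exists_dvd_of_not_prime2 (by omega) hn
  obtain hm2 | rfl := hm2.lt_or_eq'
  · exact ⟨m, hmn, hm2, hm⟩
  · obtain ⟨k, rfl⟩ := hmn
    have : k ≠ 2 := by rintro rfl; exact h4 rfl
    have : k ≠ 1 := by rintro rfl; exact hn Nat.prime_two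
    exact ⟨k, dvd_mul_left k 2, by omega, by omega⟩

open Subgroup

section Group

variable {G : Type*} [Group G]

lemma inv_ne_self_of_not_orderOf_dvd_two {x : G} (hx : ¬ orderOf x ∣ 2) : x⁻¹ ≠ x := fun h =>
  hx (orderOf_dvd_of_pow_eq_one (by rw [sq]; exact inv_eq_iff_mul_eq_one.1 h))

lemma zpowers_lt_zpowers_iff_s10 {a w : G} (ha : a ∈ zpowers w) (hw : orderOf w ≠ 0) :
    zpowers a < zpowers w ↔ orderOf a < orderOf w := by
  have : Finite (zpowers w) := Nat.finite_of_card_ne_zero (by rwa [Nat.card_zpowers])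
  have hle : zpowers a ≤ zpowers w := zpowers_le.2 ha
  rw [lt_iff_le_and_ne, ← Nat.card_zpowers, ← Nat.card_zpowers]
  refine ⟨fun ⟨_, hne⟩ => (card_le_of_le hle).lt_of_ne fun h => hne (eq_of_le_of_card_ge hle h.ge),
    fun h => ⟨hle, fun he => h.ne (by rw [he])⟩⟩

lemma zpowers_sq_lt_zpowers_of_not_isOfFinOrder {x : G} (hx : ¬ IsOfFinOrder x) :
    zpowers (x ^ 2) < zpowers x := by
  refine (zpowers_le.2 (pow_mem (mem_zpowers x) 2)).lt_of_ne fun h => ?_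
  obtain ⟨k, hk⟩ := mem_zpowers_iff.1 (h ▸ mem_zpowers x)
  have := injective_zpow_iff_not_isOfFinOrder.2 hx
    (show x ^ (2 * k) = x ^ (1 : ℤ) by rw [zpow_mul, zpow_ofNat, hk, zpow_one])
  omega

lemma eq_pow_of_orderOf_eq_two {a w : G} {n : ℕ} (haw : a ∈ zpowers w) (hw : orderOf w = 2 * n)
    (ha : orderOf a = 2) : a = w ^ n := by
  -- writing `a = w ^ k`: `2n ∣ 2k` but `2n ∤ k`, so `k` is an odd multiple of `n`
  obtain ⟨k, rfl⟩ := mem_zpowers_iff.1 haw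
  have hsq : (2 * n : ℤ) ∣ 2 * k := by
    rw [← mul_comm k, ← Nat.cast_ofNat, ← Nat.cast_mul, ← hw, orderOf_dvd_iff_zpow_eq_one,
      zpow_mul, zpow_natCast, ← ha, pow_orderOf_eq_one]
  have hne : ¬ (2 * n : ℤ) ∣ k := by
    rw [← Nat.cast_ofNat, ← Nat.cast_mul, ← hw, orderOf_dvd_iff_zpow_eq_one]
    intro h
    simp [h] at ha
  obtain ⟨j, rfl⟩ := (mul_dvd_mul_iff_left two_ne_zero).1 hsq
  obtain ⟨t, rfl⟩ | ⟨t, rfl⟩ := j.even_or_odd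
  · exact absurd ⟨t, by ring⟩ hne
  · rw [← zpow_natCast, ← mul_inv_eq_one, ← zpow_sub, ← orderOf_dvd_iff_zpow_eq_one, hw]
    exact ⟨t, by push_cast; ring⟩

lemma properRedPowGraph_adj {u v : {x : G // x ≠ 1}} :
    (properRedPowGraph G).Adj u v ↔
      zpowers (u : G) < zpowers (v : G) ∨ zpowers (v : G) < zpowers (u : G) := Iff.rfl

lemma not_isAcyclic_properRedPowGraph_of_zpowers_lt {a b : G} (hab : zpowers a < zpowers b)
    (ha : a⁻¹ ≠ a) (hb : b⁻¹ ≠ b) : ¬ (properRedPowGraph G).IsAcyclic := by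
  have ne_one {x : G} (hx : x⁻¹ ≠ x) : x ≠ 1 := fun h => hx (by rw [h, inv_one])
  refine not_isAcyclic_of_square (a := ⟨b, ne_one hb⟩) (b := ⟨a, ne_one ha⟩)
    (c := ⟨b⁻¹, inv_ne_one.2 (ne_one hb)⟩) (d := ⟨a⁻¹, inv_ne_one.2 (ne_one ha)⟩) ?_ ?_ ?_ ?_
    (fun h => hb (congrArg Subtype.val h).symm) (fun h => ha (congrArg Subtype.val h).symm) <;>
  simp [properRedPowGraph_adj, zpowers_inv, hab]

lemma not_isAcyclic_properRedPowGraph {x : G} (h1 : orderOf x ≠ 1) (h4 : orderOf x ≠ 4)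
    (hp : ¬ (orderOf x).Prime) : ¬ (properRedPowGraph G).IsAcyclic := by
  have not_dvd_two {n : ℕ} (hn : 2 < n) : ¬ n ∣ 2 := fun h => (Nat.le_of_dvd two_pos h).not_gt hn
  obtain h0 | h0 := eq_or_ne (orderOf x) 0
  · have hx := orderOf_eq_zero_iff.1 h0
    have hx2 : orderOf (x ^ 2) = 0 :=
      orderOf_eq_zero_iff.2 fun h => hx (h.of_pow two_ne_zero)
    refine not_isAcyclic_properRedPowGraph_of_zpowers_lt
      (zpowers_sq_lt_zpowers_of_not_isOfFinOrder hx) ?_ ?_ <;>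
    exact inv_ne_self_of_not_orderOf_dvd_two (by simp [h0, hx2])
  · obtain ⟨m, hm, h2m, hmx⟩ := Nat.exists_dvd_two_lt_lt_of_not_prime h0 h1 h4 hp
    have hy : orderOf (x ^ (orderOf x / m)) = m := orderOf_pow_orderOf_div h0 hm
    exact not_isAcyclic_properRedPowGraph_of_zpowers_lt
      ((zpowers_lt_zpowers_iff_s10 (pow_mem (mem_zpowers x) _) h0).2 (hy ▸ hmx))
      (inv_ne_self_of_not_orderOf_dvd_two (by rw [hy]; exact not_dvd_two h2m))
      (inv_ne_self_of_not_orderOf_dvd_two (not_dvd_two (h2m.trans hmx)))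

section OrdersOneFourOrPrime

variable (H : ∀ x : G, orderOf x = 1 ∨ orderOf x = 4 ∨ (orderOf x).Prime)
include H

lemma orderOf_eq_four_and_eq_sq_of_zpowers_lt {a w : G} (ha : a ≠ 1)
    (hlt : zpowers a < zpowers w) : orderOf w = 4 ∧ a = w ^ 2 := by
  have haw : a ∈ zpowers w := zpowers_le.1 hlt.le
  have hdvd : orderOf a ∣ orderOf w := orderOf_dvd_of_mem_zpowers haw
  have ha1 : orderOf a ≠ 1 := mt orderOf_eq_one_iff.1 ha
  have hw0 : orderOf w ≠ 0 := by
    rcases H w with h | h | h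
    exacts [by omega, by omega, h.ne_zero]
  have ha0 : orderOf a ≠ 0 := (Nat.pos_of_dvd_of_pos hdvd (Nat.pos_of_ne_zero hw0)).ne'
  have hlt' : orderOf a < orderOf w := (zpowers_lt_zpowers_iff_s10 haw hw0).1 hlt
  have hw4 : orderOf w = 4 := by
    rcases H w with h | h | h
    · omega
    · exact h
    · exact absurd ((h.eq_one_or_self_of_dvd _ hdvd).resolve_left ha1) hlt'.ne
  have ha2 : orderOf a = 2 := by
    rw [hw4] at hdvd hlt'
    interval_cases orderOf a <;> simp_all
  exact ⟨hw4, eq_pow_of_orderOf_eq_two haw hw4 ha2⟩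

lemma eq_sq_of_properRedPowGraph_adj {w x : {x : G // x ≠ 1}} (hw : orderOf (w : G) = 4)
    (hwx : (properRedPowGraph G).Adj w x) : (x : G) = (w : G) ^ 2 := by
  rcases hwx with hwx | hxw
  · obtain ⟨hx, hwx⟩ := orderOf_eq_four_and_eq_sq_of_zpowers_lt H w.2 hwx
    have hx4 : (x : G) ^ 4 = 1 := hx ▸ pow_orderOf_eq_one _
    have : orderOf (w : G) ∣ 2 := orderOf_dvd_of_pow_eq_one (by rw [hwx, ← pow_mul]; exact hx4)
    norm_num [hw] at this
  · exact (orderOf_eq_four_and_eq_sq_of_zpowers_lt H x.2 hxw).2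

theorem isAcyclic_properRedPowGraph : (properRedPowGraph G).IsAcyclic := by
  have isBridge {u v : {x : G // x ≠ 1}} (h : zpowers (u : G) < zpowers (v : G)) :
      (properRedPowGraph G).IsBridge s(v, u) := by
    have hv := (orderOf_eq_four_and_eq_sq_of_zpowers_lt H u.2 h).1
    have hvu : (properRedPowGraph G).Adj v u := Or.inr h
    refine isBridge_of_forall_adj_eq hvu.ne fun x hx => Subtype.ext ?_
    rw [eq_sq_of_properRedPowGraph_adj H hv hx, eq_sq_of_properRedPowGraph_adj H hv hvu]
  rw [isAcyclic_iff_forall_adj_isBridge]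
  rintro u v (h | h)
  · exact Sym2.eq_swap ▸ isBridge h
  · exact isBridge h

end OrdersOneFourOrPrime

end Group

theorem stmt10_general {G : Type*} [Group G] :
    (properRedPowGraph G).IsAcyclic ↔
      ∀ x : G, orderOf x = 1 ∨ orderOf x = 4 ∨ (orderOf x).Prime := by
  refine ⟨fun hG x => ?_, isAcyclic_properRedPowGraph⟩
  by_contra! h
  exact not_isAcyclic_properRedPowGraph h.1 h.2.1 h.2.2 hG

/-- RP*(G) is acyclic iff every element order of G lies in {1,4} ∪ primes. -/
theorem stmt10 {G : Type*} [Group G] [Fintype G] :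
    (properRedPowGraph G).IsAcyclic ↔
      ∀ x : G, orderOf x = 1 ∨ orderOf x = 4 ∨ (orderOf x).Prime :=
  stmt10_general
end

section
/- Let G be a finite group. Then RP*(G) is claw-free if and only if every element order of G lies in {1,4} ∪ {primes} and any two distinct cyclic subgroups of order 4 in G intersect trivially. -/
/-!
Properly nested cyclic subgroups of a finite group have different orders, so elements of equal
order are never adjacent in `RP*(G)`.

If some `x` has order `n ∉ {1, 4}` that is not prime, `⟨x⟩` already contains a claw. When `n`
has distinct prime factors `p` and `q` with `q` odd, the centre `x` sees an element `y` of order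
`q`, its square `y²`, and an element of order `p`. When `n = p ^ k` with `k ≥ 2`, an element of
order `p` sees the three distinct generators `x`, `x ^ (p + 1)`, `x ^ (2p + 1)` of `⟨x⟩`. Two
distinct cyclic subgroups `⟨x⟩`, `⟨y⟩` of order 4 that meet nontrivially share the involution
`x² = y²`, which sees `x`, `x³` and `y`.

Conversely, when all orders lie in `{1, 4} ∪ primes`, the only edges between nontrivial elements
join some `v` of order 4 to `v²`. The centre of a claw is therefore an involution whose three
leaves are square roots of it. By the intersection condition these leaves generate one cyclic
group of order 4, but such a group has only two generators.
-/

open SimpleGraph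

namespace SimpleGraph

variable {V W : Type*} (Γ : SimpleGraph V)

def IsClaw (c a b d : V) : Prop :=
  a ≠ b ∧ a ≠ d ∧ b ≠ d ∧ Γ.Adj c a ∧ Γ.Adj c b ∧ Γ.Adj c d ∧
    ¬Γ.Adj a b ∧ ¬Γ.Adj a d ∧ ¬Γ.Adj b d

theorem nonempty_claw_embedding_iff :
    Nonempty (completeBipartiteGraph (Fin 1) (Fin 3) ↪g Γ) ↔ ∃ c a b d, Γ.IsClaw c a b d := by
  constructor
  · rintro ⟨f⟩
    have hadj : ∀ i j, Γ.Adj (f i) (f j) ↔ (completeBipartiteGraph (Fin 1) (Fin 3)).Adj i j :=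
      fun _ _ => f.map_rel_iff
    refine ⟨f (.inl 0), f (.inr 0), f (.inr 1), f (.inr 2), ?_⟩
    simp only [IsClaw, hadj, f.injective.ne_iff, ne_eq]
    simp [completeBipartiteGraph]
  · rintro ⟨c, a, b, d, hab, had, hbd, hca, hcb, hcd, nab, nad, nbd⟩
    have hca' := Γ.ne_of_adj hca
    have hcb' := Γ.ne_of_adj hcb
    have hcd' := Γ.ne_of_adj hcd
    refine ⟨⟨⟨Sum.elim (fun _ => c) ![a, b, d], ?_⟩, ?_⟩⟩
    · rintro (i | i) (j | j) <;> fin_cases i <;> fin_cases j <;> simp_all [eq_comm]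
    · intro i j
      change Γ.Adj (Sum.elim (fun _ => c) ![a, b, d] i) (Sum.elim (fun _ => c) ![a, b, d] j) ↔ _
      rcases i with i | i <;> rcases j with j | j <;> fin_cases i <;> fin_cases j <;>
        simp_all [completeBipartiteGraph, Γ.adj_comm]

theorem isClaw_comap_iff {f : W → V} (hf : Function.Injective f) {c a b d : W} :
    (Γ.comap f).IsClaw c a b d ↔ Γ.IsClaw (f c) (f a) (f b) (f d) := by
  simp only [IsClaw, comap_adj, hf.ne_iff]

end SimpleGraph

open Subgroup

theorem Nat.two_mul_add_one_lt_pow {p k : ℕ} (hp : 2 ≤ p) (hk : 2 ≤ k) (h4 : p ^ k ≠ 4) :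
    2 * p + 1 < p ^ k := by
  rcases hk.eq_or_lt with rfl | hk
  · have hp3 : 3 ≤ p := by
      by_contra
      interval_cases p
      exact h4 rfl
    nlinarith
  · calc 2 * p + 1 < p ^ 3 := by nlinarith [pow_succ p 2]
      _ ≤ p ^ k := Nat.pow_le_pow_right (by omega) hk

section Group

variable {G : Type*} [Group G] {u v x y : G}

theorem zpowers_lt_zpowers_of_mem (h : u ∈ zpowers v) (ho : orderOf u ≠ orderOf v) :
    zpowers u < zpowers v :=
  lt_of_le_of_ne (zpowers_le.mpr h) fun he => ho (by rw [← Nat.card_zpowers, he, Nat.card_zpowers])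

theorem zpowers_eq_zpowers_of_mem_s13 [Finite G] (h : u ∈ zpowers v) (ho : orderOf u = orderOf v) :
    zpowers u = zpowers v :=
  eq_of_le_of_card_ge (zpowers_le.mpr h) (by rw [Nat.card_zpowers, Nat.card_zpowers, ho])

theorem orderOf_lt_orderOf_of_zpowers_lt [Finite G] (h : zpowers u < zpowers v) :
    orderOf u < orderOf v :=
  lt_of_le_of_ne (Nat.le_of_dvd (orderOf_pos v) (orderOf_dvd_of_mem_zpowers (zpowers_le.mp h.le)))
    fun ho => h.ne (zpowers_eq_zpowers_of_mem_s13 (zpowers_le.mp h.le) ho)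

theorem orderOf_sq_of_orderOf_eq_four (hx : orderOf x = 4) : orderOf (x ^ 2) = 2 := by
  rw [orderOf_pow' x (by norm_num), hx]; rfl

theorem orderOf_pow_three_of_orderOf_eq_four (hx : orderOf x = 4) : orderOf (x ^ 3) = 4 := by
  rw [orderOf_pow' x (by norm_num), hx]; rfl

theorem eq_one_or_eq_or_eq_sq_or_eq_pow_three (hx : orderOf x = 4) (hu : u ∈ zpowers x) :
    u = 1 ∨ u = x ∨ u = x ^ 2 ∨ u = x ^ 3 := by
  classical
  rw [(orderOf_pos_iff.mp (by omega)).mem_zpowers_iff_mem_range_orderOf, hx] at hu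
  obtain ⟨k, hk, rfl⟩ := Finset.mem_image.mp hu
  rw [Finset.mem_range] at hk
  interval_cases k <;> simp

theorem eq_sq_of_mem_zpowers_of_orderOf_eq_four (hx : orderOf x = 4)
    (hu : u ∈ zpowers x) (h1 : u ≠ 1) (h4 : orderOf u ≠ 4) : u = x ^ 2 := by
  rcases eq_one_or_eq_or_eq_sq_or_eq_pow_three hx hu with rfl | rfl | rfl | rfl
  · exact absurd rfl h1
  · exact absurd hx h4
  · rfl
  · exact absurd (orderOf_pow_three_of_orderOf_eq_four hx) h4

theorem eq_or_eq_pow_three_of_mem_zpowers_of_orderOf_eq_four (hx : orderOf x = 4)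
    (hu : u ∈ zpowers x) (h4 : orderOf u = 4) : u = x ∨ u = x ^ 3 := by
  rcases eq_one_or_eq_or_eq_sq_or_eq_pow_three hx hu with rfl | rfl | rfl | rfl
  · simp at h4
  · exact .inl rfl
  · simp [orderOf_sq_of_orderOf_eq_four hx] at h4
  · exact .inr rfl

theorem inf_zpowers_ne_bot_of_sq_eq_sq (hx : x ^ 2 ≠ 1) (h : x ^ 2 = y ^ 2) :
    zpowers x ⊓ zpowers y ≠ ⊥ := fun hbot => by
  have hmem : x ^ 2 ∈ zpowers x ⊓ zpowers y :=
    ⟨npow_mem_zpowers x 2, h ▸ npow_mem_zpowers y 2⟩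
  rw [hbot, mem_bot] at hmem
  exact hx hmem

theorem sq_eq_sq_of_inf_zpowers_ne_bot [Finite G] (hx : orderOf x = 4) (hy : orderOf y = 4)
    (hne : zpowers x ≠ zpowers y) (h : zpowers x ⊓ zpowers y ≠ ⊥) : x ^ 2 = y ^ 2 := by
  obtain ⟨z, ⟨hzx, hzy⟩, hz⟩ := (bot_or_exists_ne_one _).resolve_left h
  have hz4 : orderOf z ≠ 4 := fun hz4 => hne <|
    (zpowers_eq_zpowers_of_mem_s13 hzx (hz4.trans hx.symm)).symm.trans
      (zpowers_eq_zpowers_of_mem_s13 hzy (hz4.trans hy.symm))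
  exact (eq_sq_of_mem_zpowers_of_orderOf_eq_four hx hzx hz hz4).symm.trans
    (eq_sq_of_mem_zpowers_of_orderOf_eq_four hy hzy hz hz4)

end Group

section RedPowGraph

variable {G : Type*} [Group G] {a b c d u v x y : G}

theorem redPowGraph_adj_of_mem_zpowers (h : u ∈ zpowers v) (ho : orderOf u ≠ orderOf v) :
    (redPowGraph G).Adj u v :=
  .inl (zpowers_lt_zpowers_of_mem h ho)

theorem redPowGraph_one_adj (hv : v ≠ 1) : (redPowGraph G).Adj 1 v :=
  .inl (by rwa [zpowers_one_eq_bot, bot_lt_iff_ne_bot, zpowers_ne_bot])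

theorem ne_one_of_not_redPowGraph_adj (h : ¬(redPowGraph G).Adj u v) (huv : u ≠ v) : u ≠ 1 := by
  rintro rfl
  exact h (redPowGraph_one_adj huv.symm)

theorem not_redPowGraph_adj_of_orderOf_eq [Finite G] (h : orderOf u = orderOf v) :
    ¬(redPowGraph G).Adj u v := by
  rintro (hlt | hlt) <;> have := orderOf_lt_orderOf_of_zpowers_lt hlt <;> omega

theorem not_redPowGraph_adj_of_not_dvd (huv : ¬orderOf u ∣ orderOf v)
    (hvu : ¬orderOf v ∣ orderOf u) : ¬(redPowGraph G).Adj u v := by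
  rintro (hlt | hlt)
  exacts [huv (orderOf_dvd_of_mem_zpowers (zpowers_le.mp hlt.le)),
    hvu (orderOf_dvd_of_mem_zpowers (zpowers_le.mp hlt.le))]

theorem nonempty_claw_embedding_properRedPowGraph_iff :
    Nonempty (completeBipartiteGraph (Fin 1) (Fin 3) ↪g properRedPowGraph G) ↔
      ∃ c a b d : G, c ≠ 1 ∧ (redPowGraph G).IsClaw c a b d := by
  rw [nonempty_claw_embedding_iff]
  constructor
  · rintro ⟨c, a, b, d, h⟩
    exact ⟨c, a, b, d, c.2, (isClaw_comap_iff _ Subtype.val_injective).mp h⟩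
  · rintro ⟨c, a, b, d, hc, h⟩
    obtain ⟨hab, had, hbd, -, -, -, nab, nad, nbd⟩ := id h
    exact ⟨⟨c, hc⟩, ⟨a, ne_one_of_not_redPowGraph_adj nab hab⟩,
      ⟨b, ne_one_of_not_redPowGraph_adj nbd hbd⟩,
      ⟨d, ne_one_of_not_redPowGraph_adj (fun h => nad h.symm) had.symm⟩,
      (isClaw_comap_iff _ Subtype.val_injective).mpr h⟩

section OrdersFourOrPrime

variable [Finite G]

theorem orderOf_eq_four_and_eq_sq_of_zpowers_lt_s13
    (H1 : ∀ x : G, orderOf x = 1 ∨ orderOf x = 4 ∨ (orderOf x).Prime)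
    (hu : u ≠ 1) (h : zpowers u < zpowers v) :
    orderOf v = 4 ∧ u = v ^ 2 := by
  have hmem : u ∈ zpowers v := zpowers_le.mp h.le
  have hlt := orderOf_lt_orderOf_of_zpowers_lt h
  have hu1 : orderOf u ≠ 1 := mt orderOf_eq_one_iff.mp hu
  rcases H1 v with hv | hv | hv
  · have := orderOf_pos u
    omega
  · exact ⟨hv, eq_sq_of_mem_zpowers_of_orderOf_eq_four hv hmem hu (by omega)⟩
  · exact absurd ((Nat.dvd_prime hv).mp (orderOf_dvd_of_mem_zpowers hmem)) (by omega)

theorem zpowers_lt_of_redPowGraph_adj_of_adj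
    (H1 : ∀ x : G, orderOf x = 1 ∨ orderOf x = 4 ∨ (orderOf x).Prime)
    (hc : c ≠ 1) (ha : a ≠ 1) (hb : b ≠ 1)
    (hab : a ≠ b) (hca : (redPowGraph G).Adj c a) (hcb : (redPowGraph G).Adj c b) :
    zpowers c < zpowers a := by
  refine hca.resolve_right fun hac => ?_
  obtain ⟨hc4, rfl⟩ := orderOf_eq_four_and_eq_sq_of_zpowers_lt_s13 H1 ha hac
  rcases hcb with hcb | hbc
  · obtain ⟨hb4, rfl⟩ := orderOf_eq_four_and_eq_sq_of_zpowers_lt_s13 H1 hc hcb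
    simp [orderOf_sq_of_orderOf_eq_four hb4] at hc4
  · obtain ⟨-, rfl⟩ := orderOf_eq_four_and_eq_sq_of_zpowers_lt_s13 H1 hb hbc
    exact hab rfl

theorem not_isClaw_redPowGraph
    (H1 : ∀ x : G, orderOf x = 1 ∨ orderOf x = 4 ∨ (orderOf x).Prime)
    (H2 : ∀ x y : G, orderOf x = 4 → orderOf y = 4 → zpowers x ≠ zpowers y →
      zpowers x ⊓ zpowers y = ⊥) (hc : c ≠ 1) : ¬(redPowGraph G).IsClaw c a b d := by
  rintro ⟨hab, had, hbd, hca, hcb, hcd, nab, nad, nbd⟩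
  have ha := ne_one_of_not_redPowGraph_adj nab hab
  have hb := ne_one_of_not_redPowGraph_adj nbd hbd
  have hd := ne_one_of_not_redPowGraph_adj (fun h => nad h.symm) had.symm
  obtain ⟨ha4, rfl⟩ := orderOf_eq_four_and_eq_sq_of_zpowers_lt_s13 H1 hc
    (zpowers_lt_of_redPowGraph_adj_of_adj H1 hc ha hb hab hca hcb)
  have eq_pow_three : ∀ l, l ≠ 1 → l ≠ a → (redPowGraph G).Adj (a ^ 2) l → l = a ^ 3 := by
    intro l hl hla hal
    obtain ⟨hl4, hsq⟩ := orderOf_eq_four_and_eq_sq_of_zpowers_lt_s13 H1 hc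
      (zpowers_lt_of_redPowGraph_adj_of_adj H1 hc hl ha hla hal hca)
    have hzl : zpowers a = zpowers l := by
      by_contra hne
      exact inf_zpowers_ne_bot_of_sq_eq_sq hc hsq (H2 a l ha4 hl4 hne)
    exact (eq_or_eq_pow_three_of_mem_zpowers_of_orderOf_eq_four ha4 (hzl ▸ mem_zpowers l)
      hl4).resolve_left hla
  exact hbd ((eq_pow_three b hb hab.symm hcb).trans (eq_pow_three d hd had.symm hcd).symm)

end OrdersFourOrPrime

section Claws

variable [Finite G]

theorem isClaw_of_sq_eq_sq (hx : orderOf x = 4) (hy : orderOf y = 4)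
    (hne : zpowers x ≠ zpowers y) (hsq : x ^ 2 = y ^ 2) :
    (redPowGraph G).IsClaw (x ^ 2) x (x ^ 3) y := by
  have hx3 : orderOf (x ^ 3) = 4 := orderOf_pow_three_of_orderOf_eq_four hx
  have hzx3 : zpowers (x ^ 3) = zpowers x :=
    zpowers_eq_zpowers_of_mem_s13 (npow_mem_zpowers x 3) (hx3.trans hx.symm)
  have hx2 : orderOf (x ^ 2) ≠ 4 := by rw [orderOf_sq_of_orderOf_eq_four hx]; decide
  refine ⟨?_, fun h => hne (h ▸ rfl), fun h => hne (h ▸ hzx3.symm), ?_, ?_, ?_,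
    not_redPowGraph_adj_of_orderOf_eq (hx.trans hx3.symm),
    not_redPowGraph_adj_of_orderOf_eq (hx.trans hy.symm),
    not_redPowGraph_adj_of_orderOf_eq (hx3.trans hy.symm)⟩
  · simpa using (pow_injOn_Iio_orderOf (x := x)).ne (show 1 < orderOf x by omega)
      (show 3 < orderOf x by omega) (by decide)
  · exact redPowGraph_adj_of_mem_zpowers (npow_mem_zpowers x 2) (hx ▸ hx2)
  · exact redPowGraph_adj_of_mem_zpowers (hzx3 ▸ npow_mem_zpowers x 2) (hx3 ▸ hx2)
  · exact redPowGraph_adj_of_mem_zpowers (hsq ▸ npow_mem_zpowers y 2) (hy ▸ hx2)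

theorem isClaw_of_prime_dvd_orderOf {p q : ℕ} (hp : p.Prime) (hq : q.Prime) (hpq : p ≠ q)
    (hq2 : q ≠ 2) (hpx : p ∣ orderOf x) (hqx : q ∣ orderOf x) (hnp : ¬(orderOf x).Prime) :
    (redPowGraph G).IsClaw x (x ^ (orderOf x / q)) ((x ^ (orderOf x / q)) ^ 2)
      (x ^ (orderOf x / p)) := by
  set y := x ^ (orderOf x / q)
  set z := x ^ (orderOf x / p)
  have hy : orderOf y = q := orderOf_pow_orderOf_div (orderOf_pos x).ne' hqx
  have hz : orderOf z = p := orderOf_pow_orderOf_div (orderOf_pos x).ne' hpx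
  have hy2 : orderOf (y ^ 2) = q :=
    (Nat.Coprime.orderOf_pow (hy ▸ (Nat.coprime_primes hq Nat.prime_two).mpr hq2)).trans hy
  have hq3 : 2 < q := lt_of_le_of_ne hq.two_le (Ne.symm hq2)
  have hyz : ¬q ∣ p := (Nat.prime_dvd_prime_iff_eq hq hp).not.mpr hpq.symm
  have hzy : ¬p ∣ q := (Nat.prime_dvd_prime_iff_eq hp hq).not.mpr hpq
  have hmem : y ∈ zpowers x := npow_mem_zpowers x _
  refine ⟨?_, fun h => hpq (by rw [← hz, ← h, hy]), fun h => hpq (by rw [← hz, ← h, hy2]),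
    ?_, ?_, ?_, not_redPowGraph_adj_of_orderOf_eq (hy.trans hy2.symm),
    not_redPowGraph_adj_of_not_dvd (by rwa [hy, hz]) (by rwa [hy, hz]),
    not_redPowGraph_adj_of_not_dvd (by rwa [hy2, hz]) (by rwa [hy2, hz])⟩
  · simpa using (pow_injOn_Iio_orderOf (x := y)).ne (show 1 < orderOf y by omega)
      (show 2 < orderOf y by omega) (by decide)
  · exact (redPowGraph_adj_of_mem_zpowers hmem (by rw [hy]; rintro rfl; exact hnp hq)).symm
  · exact (redPowGraph_adj_of_mem_zpowers (pow_mem hmem 2)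
      (by rw [hy2]; rintro rfl; exact hnp hq)).symm
  · exact (redPowGraph_adj_of_mem_zpowers (npow_mem_zpowers x _)
      (by rw [hz]; rintro rfl; exact hnp hp)).symm

theorem isClaw_of_coprime_orderOf {p e₁ e₂ : ℕ} (hp : p.Prime) (hpx : p ∣ orderOf x)
    (hnp : ¬(orderOf x).Prime) (he₁ : e₁.Coprime (orderOf x)) (he₂ : e₂.Coprime (orderOf x))
    (h1 : 1 < e₁) (h12 : e₁ < e₂) (h2 : e₂ < orderOf x) :
    (redPowGraph G).IsClaw (x ^ (orderOf x / p)) x (x ^ e₁) (x ^ e₂) := by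
  have hc : orderOf (x ^ (orderOf x / p)) ≠ orderOf x := by
    rw [orderOf_pow_orderOf_div (orderOf_pos x).ne' hpx]; rintro rfl; exact hnp hp
  have hgen : ∀ e, e.Coprime (orderOf x) → orderOf (x ^ e) = orderOf x ∧
      zpowers (x ^ e) = zpowers x := fun e he =>
    ⟨he.symm.orderOf_pow, zpowers_eq_zpowers_of_mem_s13 (npow_mem_zpowers x e) he.symm.orderOf_pow⟩
  obtain ⟨ho₁, hz₁⟩ := hgen e₁ he₁
  obtain ⟨ho₂, hz₂⟩ := hgen e₂ he₂
  have hcmem : x ^ (orderOf x / p) ∈ zpowers x := npow_mem_zpowers x _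
  refine ⟨?_, ?_, (pow_injOn_Iio_orderOf (x := x)).ne (show e₁ < orderOf x by omega) h2 h12.ne,
    redPowGraph_adj_of_mem_zpowers hcmem hc,
    redPowGraph_adj_of_mem_zpowers (hz₁ ▸ hcmem) (ho₁ ▸ hc),
    redPowGraph_adj_of_mem_zpowers (hz₂ ▸ hcmem) (ho₂ ▸ hc),
    not_redPowGraph_adj_of_orderOf_eq ho₁.symm, not_redPowGraph_adj_of_orderOf_eq ho₂.symm,
    not_redPowGraph_adj_of_orderOf_eq (ho₁.trans ho₂.symm)⟩
  · simpa using (pow_injOn_Iio_orderOf (x := x)).ne (show 1 < orderOf x by omega)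
      (show e₁ < orderOf x by omega) h1.ne
  · simpa using (pow_injOn_Iio_orderOf (x := x)).ne (show 1 < orderOf x by omega) h2
      (h1.trans h12).ne

theorem exists_isClaw_of_orderOf_eq_prime_pow {p k : ℕ} (hp : p.Prime) (hk : 2 ≤ k)
    (hx : orderOf x = p ^ k) (h4 : orderOf x ≠ 4) :
    ∃ c a b d : G, c ≠ 1 ∧ (redPowGraph G).IsClaw c a b d := by
  have hpx : p ∣ orderOf x := hx ▸ dvd_pow_self p (by omega)
  have hnp : ¬(orderOf x).Prime := hx ▸ Nat.Prime.not_prime_pow' (by omega)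
  have hcop : ∀ e, ¬p ∣ e → e.Coprime (orderOf x) := fun e he => hx ▸
    Nat.Coprime.pow_right _ ((Nat.coprime_comm.trans hp.coprime_iff_not_dvd).mpr he)
  have hc : x ^ (orderOf x / p) ≠ 1 := fun h => hp.ne_one <| by
    rw [← orderOf_pow_orderOf_div (orderOf_pos x).ne' hpx, h, orderOf_one]
  have hp2 := hp.two_le
  refine ⟨_, _, _, _, hc, isClaw_of_coprime_orderOf hp hpx hnp (hcop (p + 1) ?_)
    (hcop (2 * p + 1) ?_) (by omega) (by omega)
    (hx ▸ Nat.two_mul_add_one_lt_pow hp2 hk (hx ▸ h4))⟩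
  · exact fun h => hp.ne_one (Nat.dvd_one.mp ((Nat.dvd_add_right dvd_rfl).mp h))
  · exact fun h => hp.ne_one (Nat.dvd_one.mp ((Nat.dvd_add_right (dvd_mul_left p 2)).mp h))

theorem exists_isClaw_of_prime_dvd_orderOf {p q : ℕ} (hp : p.Prime) (hq : q.Prime)
    (hpq : p ≠ q) (hpx : p ∣ orderOf x) (hqx : q ∣ orderOf x) (hnp : ¬(orderOf x).Prime) :
    ∃ c a b d : G, c ≠ 1 ∧ (redPowGraph G).IsClaw c a b d := by
  wlog hq2 : q ≠ 2 generalizing p q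
  · exact this hq hp hpq.symm hqx hpx (by omega)
  have hx : x ≠ 1 := by
    rintro rfl
    rw [orderOf_one, Nat.dvd_one] at hpx
    exact hp.ne_one hpx
  exact ⟨x, _, _, _, hx, isClaw_of_prime_dvd_orderOf hp hq hpq hq2 hpx hqx hnp⟩

theorem exists_isClaw_of_orderOf (h1 : orderOf x ≠ 1) (h4 : orderOf x ≠ 4)
    (hnp : ¬(orderOf x).Prime) : ∃ c a b d : G, c ≠ 1 ∧ (redPowGraph G).IsClaw c a b d := by
  have hp := Nat.minFac_prime h1
  by_cases hpow : ∀ {q}, q.Prime → q ∣ orderOf x → q = (orderOf x).minFac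
  · have hx := Nat.eq_prime_pow_of_unique_prime_dvd (orderOf_pos x).ne' hpow
    refine exists_isClaw_of_orderOf_eq_prime_pow hp ?_ hx h4
    by_contra! hk
    interval_cases (orderOf x).primeFactorsList.length
    · exact h1 (hx.trans (pow_zero _))
    · rw [pow_one] at hx
      exact hnp (hx ▸ hp)
  · push Not at hpow
    obtain ⟨q, hq, hqx, hqp⟩ := hpow
    exact exists_isClaw_of_prime_dvd_orderOf hp hq (Ne.symm hqp) (Nat.minFac_dvd _) hqx hnp

end Claws

end RedPowGraph

/-- RP*(G) is claw-free iff every element order lies in {1,4} ∪ primes and any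
two distinct cyclic subgroups of order 4 intersect trivially. -/
theorem stmt13 {G : Type*} [Group G] [Fintype G] :
    IsEmpty (completeBipartiteGraph (Fin 1) (Fin 3) ↪g properRedPowGraph G) ↔
      ((∀ x : G, orderOf x = 1 ∨ orderOf x = 4 ∨ (orderOf x).Prime) ∧
       ∀ x y : G, orderOf x = 4 → orderOf y = 4 →
         Subgroup.zpowers x ≠ Subgroup.zpowers y →
         Subgroup.zpowers x ⊓ Subgroup.zpowers y = ⊥) := by
  rw [← not_nonempty_iff, nonempty_claw_embedding_properRedPowGraph_iff]
  constructor
  · intro hfree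
    refine ⟨fun x => ?_, fun x y hx hy hne => ?_⟩
    · by_contra! h
      exact hfree (exists_isClaw_of_orderOf h.1 h.2.1 h.2.2)
    · by_contra h
      have hx2 : x ^ 2 ≠ 1 := fun h1 => by
        simpa [h1] using orderOf_sq_of_orderOf_eq_four hx
      exact hfree ⟨_, _, _, _, hx2,
        isClaw_of_sq_eq_sq hx hy hne (sq_eq_sq_of_inf_zpowers_ne_bot hx hy hne h)⟩
  · rintro ⟨H1, H2⟩ ⟨c, a, b, d, hc, hclaw⟩
    exact not_isClaw_redPowGraph H1 H2 hc hclaw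
end

section
/- For a finite group G, neither RP(G) nor RP*(G) is isomorphic to a cycle C_n for any n ≥ 3. -/
open SimpleGraph

/-!
In both graphs `x` and `x⁻¹` have the same neighbours, and two distinct vertices of `Cₙ` with the
same neighbours exist only for `n = 4`. In `RP(G)` the identity is adjacent to every other vertex,
which in a cycle forces `n = 3`; then `|G| = 3` and any `g ≠ 1` gives twins `g ≠ g⁻¹`. In `RP*(G)`
an edge `⟨p⟩ < ⟨q⟩` with `p ≠ 1` makes `q` of order `> 2`, so `q ≠ q⁻¹` are twins, `n = 4` and
`|G| = 5`; but in a group of prime order every nontrivial cyclic subgroup is the whole group, so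
`RP*(G)` has no edges at all.
-/

namespace SimpleGraph

open Fin.NatCast Fin.CommRing in
/-- A twin `b` of `a` is both `a + 2` (sharing the neighbour `a + 1`) and `a - 2`
(sharing `a - 1`), so `4 = 0 ≠ 2` in `ZMod n`. -/
theorem cycleGraph_eq_four_of_adj_iff {n : ℕ} {a b : Fin n} (hab : a ≠ b)
    (h : ∀ c, (cycleGraph n).Adj a c ↔ (cycleGraph n).Adj b c) : n = 4 := by
  obtain _ | _ | m := n
  · exact a.elim0
  · exact absurd (Fin.ext (by omega)) hab
  have hb_add : b = a + 2 := by
    have := (h (a + 1)).mp (by rw [cycleGraph_adj]; right; ring)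
    rcases cycleGraph_adj.mp this with h1 | h1
    · linear_combination h1
    · exact absurd (by linear_combination h1) hab
  have hb_sub : b = a - 2 := by
    have := (h (a - 1)).mp (by rw [cycleGraph_adj]; left; ring)
    rcases cycleGraph_adj.mp this with h1 | h1
    · exact absurd (by linear_combination -h1) hab
    · linear_combination -h1
  have h4 : m + 2 ∣ 4 := by
    rw [← Fin.natCast_eq_zero]
    push_cast
    linear_combination hb_sub - hb_add
  have h2 : ¬ m + 2 ∣ 2 := by
    rw [← Fin.natCast_eq_zero]
    push_cast
    exact fun h2 => hab (by linear_combination -hb_add - h2)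
  have : m ≤ 2 := by have := Nat.le_of_dvd (by norm_num) h4; omega
  interval_cases m <;> omega

theorem le_three_of_isUniversal_cycleGraph {n : ℕ} {v : Fin n}
    (hv : (cycleGraph n).IsUniversal v) : n ≤ 3 := by
  obtain _ | _ | _ | m := n
  all_goals try omega
  have := (degree_eq_card_sub_one _ v).mpr hv
  rw [cycleGraph_degree_three_le, Fintype.card_fin] at this
  omega

namespace Iso

variable {V W : Type*} {H : SimpleGraph V} {H' : SimpleGraph W}

theorem isUniversal_apply (f : H ≃g H') {v : V} (hv : H.IsUniversal v) :
    H'.IsUniversal (f v) := by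
  intro w hw
  rw [← f.apply_symm_apply w, f.map_adj_iff]
  exact hv fun h => hw (by rw [h, f.apply_symm_apply])

theorem eq_four_of_adj_iff {n : ℕ} (f : H ≃g cycleGraph n) {x y : V} (hxy : x ≠ y)
    (h : ∀ z, H.Adj x z ↔ H.Adj y z) : n = 4 := by
  refine cycleGraph_eq_four_of_adj_iff (f.injective.ne hxy) fun c => ?_
  rw [← f.apply_symm_apply c, f.map_adj_iff, f.map_adj_iff]
  exact h _

end Iso

end SimpleGraph

section Group

variable {G : Type*} [Group G]

theorem two_lt_orderOf_of_zpowers_lt [Finite G] {u v : G} (hu : u ≠ 1)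
    (h : Subgroup.zpowers u < Subgroup.zpowers v) : 2 < orderOf v := by
  have hu_pos : 0 < orderOf u := orderOf_pos u
  have hu_ne : orderOf u ≠ 1 := orderOf_eq_one_iff.not.mpr hu
  have hle := Subgroup.card_le_of_le h.le
  have hne : Nat.card (Subgroup.zpowers u) ≠ Nat.card (Subgroup.zpowers v) :=
    fun e => h.ne (Subgroup.eq_of_le_of_card_ge h.le e.ge)
  rw [Nat.card_zpowers, Nat.card_zpowers] at hle hne
  omega

theorem inv_ne_self_of_two_lt_orderOf {v : G} (h : 2 < orderOf v) : v⁻¹ ≠ v := by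
  intro hv
  have : orderOf v ∣ 2 := orderOf_dvd_of_pow_eq_one (by rw [sq, ← inv_eq_iff_mul_eq_one, hv])
  have := Nat.le_of_dvd two_pos this
  omega

theorem zpowers_not_lt_of_prime_card (hG : (Nat.card G).Prime) {u : G} (hu : u ≠ 1) (v : G) :
    ¬ Subgroup.zpowers u < Subgroup.zpowers v := by
  have := Fact.mk hG
  rw [zpowers_eq_top_of_prime_card rfl hu]
  exact not_top_lt

end Group

section RedPowGraph

variable {G : Type*} [Group G]

theorem redPowGraph_adj {u v : G} :
    (redPowGraph G).Adj u v ↔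
      Subgroup.zpowers u < Subgroup.zpowers v ∨ Subgroup.zpowers v < Subgroup.zpowers u :=
  Iff.rfl

@[simp]
theorem redPowGraph_adj_inv_left {u v : G} :
    (redPowGraph G).Adj u⁻¹ v ↔ (redPowGraph G).Adj u v := by
  simp only [redPowGraph_adj, Subgroup.zpowers_inv]

theorem redPowGraph_isUniversal_one : (redPowGraph G).IsUniversal 1 := fun v hv =>
  Or.inl <| by
    rw [Subgroup.zpowers_one_eq_bot, bot_lt_iff_ne_bot, Ne, Subgroup.zpowers_eq_bot]
    exact hv.symm

theorem redPowGraph_isEmpty_iso_cycleGraph [Finite G] {n : ℕ} (hn : 3 ≤ n) :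
    IsEmpty (redPowGraph G ≃g cycleGraph n) := by
  refine ⟨fun f => ?_⟩
  have hn3 : n = 3 := le_antisymm
    (le_three_of_isUniversal_cycleGraph (f.isUniversal_apply redPowGraph_isUniversal_one)) hn
  have hG : Nat.card G = 3 := by rw [Nat.card_congr f.toEquiv, Nat.card_fin, hn3]
  have : Nontrivial G := Finite.one_lt_card_iff_nontrivial.mp (by omega)
  obtain ⟨g, hg⟩ := exists_ne (1 : G)
  have hg3 : orderOf g = 3 := by
    have := Fact.mk Nat.prime_three
    exact orderOf_eq_prime (hG ▸ pow_card_eq_one') hg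
  have := f.eq_four_of_adj_iff (inv_ne_self_of_two_lt_orderOf (v := g) (by omega))
    fun _ => redPowGraph_adj_inv_left
  omega

theorem properRedPowGraph_isEmpty_iso_cycleGraph [Fintype G] {n : ℕ} (hn : 2 ≤ n) :
    IsEmpty (properRedPowGraph G ≃g cycleGraph n) := by
  classical
  refine ⟨fun f => ?_⟩
  obtain ⟨m, rfl⟩ : ∃ m, n = m + 2 := ⟨n - 2, by omega⟩
  obtain ⟨p, q, hpq⟩ : ∃ p q : {x : G // x ≠ 1}, Subgroup.zpowers p.1 < Subgroup.zpowers q.1 := by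
    have : (properRedPowGraph G).Adj (f.symm 0) (f.symm 1) :=
      f.symm.map_adj_iff.mpr (by rw [cycleGraph_adj]; right; simp)
    rcases this with h | h
    exacts [⟨_, _, h⟩, ⟨_, _, h⟩]
  have hq : q.1⁻¹ ≠ q.1 := inv_ne_self_of_two_lt_orderOf (two_lt_orderOf_of_zpowers_lt p.2 hpq)
  have hn4 := f.eq_four_of_adj_iff (x := ⟨q.1⁻¹, inv_ne_one.mpr q.2⟩) (y := q)
    (fun h => hq (congrArg Subtype.val h)) fun _ => redPowGraph_adj_inv_left
  have hG : Fintype.card G = 5 := by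
    have := Fintype.card_congr f.toEquiv
    rw [Fintype.card_subtype_compl, Fintype.card_subtype_eq, Fintype.card_fin] at this
    omega
  refine zpowers_not_lt_of_prime_card ?_ p.2 q.1 hpq
  rw [Nat.card_eq_fintype_card, hG]
  norm_num

end RedPowGraph

/-- Neither RP(G) nor RP*(G) is isomorphic to a cycle Cₙ, n ≥ 3. -/
theorem stmt14 {G : Type*} [Group G] [Fintype G] :
    ∀ n : ℕ, 3 ≤ n →
      IsEmpty (redPowGraph G ≃g SimpleGraph.cycleGraph n) ∧
      IsEmpty (properRedPowGraph G ≃g SimpleGraph.cycleGraph n) :=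
  fun _ hn => ⟨redPowGraph_isEmpty_iso_cycleGraph hn,
    properRedPowGraph_isEmpty_iso_cycleGraph (by omega)⟩
end

section
/- Let G be a finite group. If x ∈ G∖{e} is a cut vertex of RP*(G), then x has order 2. -/
/-! A vertex whose neighbourhood is contained in that of another vertex `w` can be folded onto `w`
by a graph homomorphism that retracts the graph onto the graph with `v` removed, so removing `v`
cannot increase the number of components. In `RP*(G)` the neighbourhood of `x` depends only on
`⟨x⟩ = ⟨x⁻¹⟩`, so `x` can be folded onto `x⁻¹` unless `x = x⁻¹`. -/

open SimpleGraph

/-- A cut vertex: a vertex whose removal increases the number of connected components. -/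
def IsCutVertex {V : Type*} (Γ : SimpleGraph V) (v : V) : Prop :=
  Nat.card Γ.ConnectedComponent < Nat.card (Γ.induce {u | u ≠ v}).ConnectedComponent

namespace SimpleGraph

variable {V W : Type*} {Γ : SimpleGraph V} {Δ : SimpleGraph W}

theorem ConnectedComponent.map_injective_of_leftInverse {ι : Δ →g Γ} {r : Γ →g Δ}
    (h : ∀ w, r (ι w) = w) : Function.Injective (ConnectedComponent.map ι) :=
  Function.LeftInverse.injective (g := ConnectedComponent.map r) fun C => by
    rw [ConnectedComponent.map_comp, show r.comp ι = Hom.id from RelHom.ext h,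
      ConnectedComponent.map_id]

theorem card_connectedComponent_le_of_retraction [Finite Γ.ConnectedComponent]
    (ι : Δ →g Γ) (r : Γ →g Δ) (h : ∀ w, r (ι w) = w) :
    Nat.card Δ.ConnectedComponent ≤ Nat.card Γ.ConnectedComponent :=
  Nat.card_le_card_of_injective _ (ConnectedComponent.map_injective_of_leftInverse h)

open Classical in
noncomputable def foldOnto (Γ : SimpleGraph V) {v w : V} (hwv : w ≠ v)
    (h : Γ.neighborSet v ⊆ Γ.neighborSet w) : Γ →g Γ.induce {u | u ≠ v} where
  toFun u := if hu : u = v then ⟨w, hwv⟩ else ⟨u, hu⟩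
  map_rel' {a b} hab := by
    by_cases ha : a = v <;> by_cases hb : b = v <;> simp only [ha, hb, dite_true, dite_false]
    · exact absurd (ha ▸ hb ▸ hab) Γ.irrefl
    · exact h (ha ▸ hab)
    · exact (h (hb ▸ hab.symm)).symm
    · exact hab

theorem not_isCutVertex_of_neighborSet_subset [Finite Γ.ConnectedComponent] {v w : V}
    (hwv : w ≠ v) (h : Γ.neighborSet v ⊆ Γ.neighborSet w) : ¬ IsCutVertex Γ v :=
  not_lt.mpr <| card_connectedComponent_le_of_retraction (Embedding.induce _).toHom
    (Γ.foldOnto hwv h) fun u => dif_neg u.2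

end SimpleGraph

theorem properRedPowGraph_neighborSet_subset_inv {G : Type*} [Group G] (x : {x : G // x ≠ 1}) :
    (properRedPowGraph G).neighborSet x ⊆
      (properRedPowGraph G).neighborSet ⟨(x : G)⁻¹, inv_ne_one.mpr x.2⟩ := fun _ hu => by
  simpa [properRedPowGraph, redPowGraph, Subgroup.zpowers_inv] using hu

/-- If x is a cut vertex of RP*(G), then x has order 2. -/
theorem stmt15 {G : Type*} [Group G] [Fintype G] (x : {x : G // x ≠ 1})
    (hx : IsCutVertex (properRedPowGraph G) x) : orderOf (x : G) = 2 := by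
  have hinv : (x : G)⁻¹ = x := by
    by_contra hne
    exact not_isCutVertex_of_neighborSet_subset (fun h => hne (congrArg Subtype.val h))
      (properRedPowGraph_neighborSet_subset_inv x) hx
  exact orderOf_eq_prime (by rw [pow_two, ← inv_eq_iff_mul_eq_one, hinv]) x.2
end

section
/- Let G be a finite cyclic group of order at least 2. Then RP*(G) has a cut vertex if and only if G ≅ ℤ₄. -/
open SimpleGraph

/-! Generators of `G` are pairwise non-adjacent in `RP*(G)`, and each generator is adjacent to
every non-trivial non-generator; so as soon as one vertex of each kind survives, the graph is
connected. For prime order there are no edges at all. Otherwise, unless `|G| = 4`, there is a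
generator and a non-trivial non-generator of order `> 2`, and since `x ≠ x⁻¹` for such elements,
each kind still has a representative after deleting any single vertex. In `ℤ₄` the only
non-trivial non-generator is `g²`, and deleting it leaves the two isolated generators `g, g⁻¹`. -/

open Subgroup

namespace SimpleGraph

variable {V : Type*} {Γ : SimpleGraph V}

lemma card_connectedComponent_eq_card_of_forall_not_adj (h : ∀ u v, ¬ Γ.Adj u v) :
    Nat.card Γ.ConnectedComponent = Nat.card V := by
  refine (Nat.card_eq_of_bijective Γ.connectedComponentMk
    ⟨fun u v huv => ?_, fun c => c.exists_rep⟩).symm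
  obtain ⟨w⟩ := ConnectedComponent.eq.1 huv
  cases w with
  | nil => rfl
  | cons hadj _ => exact absurd hadj (h _ _)

lemma Connected.card_connectedComponent (h : Γ.Connected) :
    Nat.card Γ.ConnectedComponent = 1 :=
  have := h.preconnected.subsingleton_connectedComponent
  Nat.card_eq_one_iff_unique.2 ⟨this, ⟨Γ.connectedComponentMk h.nonempty.some⟩⟩

variable [Finite V]

lemma not_isCutVertex_of_forall_not_adj (h : ∀ u v, ¬ Γ.Adj u v) (v : V) :
    ¬ IsCutVertex Γ v := by
  rw [IsCutVertex, not_lt, card_connectedComponent_eq_card_of_forall_not_adj h,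
    card_connectedComponent_eq_card_of_forall_not_adj (Γ := Γ.induce _) fun a b => h a b]
  exact Finite.card_subtype_le _

lemma not_isCutVertex_of_connected_induce {v : V} (h : (Γ.induce {u | u ≠ v}).Connected) :
    ¬ IsCutVertex Γ v := by
  have : Nonempty Γ.ConnectedComponent := ⟨Γ.connectedComponentMk v⟩
  rw [IsCutVertex, h.card_connectedComponent, not_lt, Nat.one_le_iff_ne_zero]
  exact Nat.card_pos.ne'

lemma isCutVertex_of_forall_not_adj_induce (hΓ : Γ.Connected) {v a b : V} (hav : a ≠ v)
    (hbv : b ≠ v) (hab : a ≠ b) (h : ∀ u w, ¬ (Γ.induce {u | u ≠ v}).Adj u w) :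
    IsCutVertex Γ v := by
  rw [IsCutVertex, hΓ.card_connectedComponent, card_connectedComponent_eq_card_of_forall_not_adj h,
    Finite.one_lt_card_iff_nontrivial]
  exact ⟨⟨a, hav⟩, ⟨b, hbv⟩, fun h => hab (congrArg Subtype.val h)⟩

end SimpleGraph

lemma Nat.exists_dvd_three_le_lt_of_not_prime {n : ℕ} (hn : 2 ≤ n) (hp : ¬ n.Prime)
    (h4 : n ≠ 4) : ∃ d, d ∣ n ∧ 3 ≤ d ∧ d < n := by
  obtain ⟨m, ⟨k, rfl⟩, hm2, hmn⟩ := Nat.exists_dvd_of_not_prime2 hn hp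
  rcases (show m = 2 ∨ 3 ≤ m by omega) with rfl | hm3
  · exact ⟨k, dvd_mul_left k 2, by omega, by omega⟩
  · exact ⟨m, dvd_mul_right m k, hm3, hmn⟩

section

variable {G : Type*} [Group G]

lemma ne_inv_of_two_lt_orderOf {x : G} (hx : 2 < orderOf x) : x ≠ x⁻¹ := fun h => by
  have hsq : x ^ 2 = 1 := by rwa [sq, mul_eq_one_iff_eq_inv]
  have := orderOf_le_of_pow_eq_one two_pos hsq
  omega

lemma exists_zpowers_eq_ne_of_two_lt_orderOf {y : G} (hy : 2 < orderOf y) (v : G) :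
    ∃ z, zpowers z = zpowers y ∧ z ≠ 1 ∧ z ≠ v := by
  have hy1 : y ≠ 1 := by rintro rfl; simp at hy
  by_cases hyv : y = v
  · exact ⟨y⁻¹, zpowers_inv, inv_ne_one.2 hy1, hyv ▸ (ne_inv_of_two_lt_orderOf hy).symm⟩
  · exact ⟨y, rfl, hy1, hyv⟩

lemma redPowGraph_adj_of_zpowers_eq_top {a b : G} (ha : zpowers a = ⊤) (hb : zpowers b ≠ ⊤) :
    (redPowGraph G).Adj a b :=
  Or.inr (ha ▸ hb.lt_top)

lemma not_redPowGraph_adj_of_zpowers_eq_top {a b : G} (ha : zpowers a = ⊤)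
    (hb : zpowers b = ⊤) : ¬ (redPowGraph G).Adj a b := by
  rintro (h | h) <;> simp [ha, hb] at h

lemma properRedPowGraph_induce_connected {s : Set {x : G // x ≠ 1}} {a b : {x : G // x ≠ 1}}
    (has : a ∈ s) (hbs : b ∈ s) (ha : zpowers (a : G) = ⊤) (hb : zpowers (b : G) ≠ ⊤) :
    ((properRedPowGraph G).induce s).Connected := by
  have hab : ((properRedPowGraph G).induce s).Adj ⟨a, has⟩ ⟨b, hbs⟩ :=
    redPowGraph_adj_of_zpowers_eq_top ha hb
  refine (connected_iff_exists_forall_reachable _).2 ⟨⟨a, has⟩, fun ⟨u, hus⟩ => ?_⟩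
  by_cases hu : zpowers (u : G) = ⊤
  · exact hab.reachable.trans (Adj.reachable (redPowGraph_adj_of_zpowers_eq_top hu hb).symm)
  · exact Adj.reachable (redPowGraph_adj_of_zpowers_eq_top ha hu)

lemma properRedPowGraph_connected {a b : {x : G // x ≠ 1}} (ha : zpowers (a : G) = ⊤)
    (hb : zpowers (b : G) ≠ ⊤) : (properRedPowGraph G).Connected :=
  (induceUnivIso _).connected_iff.1
    (properRedPowGraph_induce_connected (Set.mem_univ a) (Set.mem_univ b) ha hb)

lemma not_properRedPowGraph_adj_of_prime_card (hp : (Nat.card G).Prime)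
    (u v : {x : G // x ≠ 1}) : ¬ (properRedPowGraph G).Adj u v :=
  have := Fact.mk hp
  not_redPowGraph_adj_of_zpowers_eq_top (zpowers_eq_top_of_prime_card rfl u.2)
    (zpowers_eq_top_of_prime_card rfl v.2)

variable [Finite G]

lemma zpowers_eq_top_iff_orderOf_eq_natCard {x : G} : zpowers x = ⊤ ↔ orderOf x = Nat.card G := by
  rw [← card_eq_iff_eq_top, Nat.card_zpowers]

lemma not_isCutVertex_properRedPowGraph_of_two_lt_orderOf {g x : G} (hg : zpowers g = ⊤)
    (hg2 : 2 < orderOf g) (hx : zpowers x ≠ ⊤) (hx2 : 2 < orderOf x) (v : {x : G // x ≠ 1}) :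
    ¬ IsCutVertex (properRedPowGraph G) v := by
  obtain ⟨a, ha, ha1, hav⟩ := exists_zpowers_eq_ne_of_two_lt_orderOf hg2 v
  obtain ⟨b, hb, hb1, hbv⟩ := exists_zpowers_eq_ne_of_two_lt_orderOf hx2 v
  exact not_isCutVertex_of_connected_induce <| properRedPowGraph_induce_connected
    (a := ⟨a, ha1⟩) (b := ⟨b, hb1⟩) (fun h => hav (congrArg Subtype.val h))
    (fun h => hbv (congrArg Subtype.val h)) (ha.trans hg) (hb ▸ hx)

lemma not_isCutVertex_properRedPowGraph_of_card_ne_four [IsCyclic G] (h4 : Nat.card G ≠ 4)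
    (v : {x : G // x ≠ 1}) : ¬ IsCutVertex (properRedPowGraph G) v := by
  have h2 : 2 ≤ Nat.card G := Finite.one_lt_card_iff_nontrivial.2 ⟨⟨v, 1, v.2⟩⟩
  by_cases hp : (Nat.card G).Prime
  · exact not_isCutVertex_of_forall_not_adj (not_properRedPowGraph_adj_of_prime_card hp) v
  obtain ⟨d, hd, hd3, hdn⟩ := Nat.exists_dvd_three_le_lt_of_not_prime h2 hp h4
  obtain ⟨g, hg⟩ := IsCyclic.exists_ofOrder_eq_natCard (α := G)
  have hx : orderOf (g ^ (Nat.card G / d)) = d := by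
    rw [← hg] at hd ⊢
    exact orderOf_pow_orderOf_div (by omega) hd
  exact not_isCutVertex_properRedPowGraph_of_two_lt_orderOf
    (zpowers_eq_top_iff_orderOf_eq_natCard.2 hg) (by omega)
    (by rw [Ne, zpowers_eq_top_iff_orderOf_eq_natCard, hx]; omega) (by omega) v

lemma zpowers_eq_top_of_ne_one_of_ne_sq {g x : G} (hg : orderOf g = 4) (h4 : Nat.card G = 4)
    (hx1 : x ≠ 1) (hx2 : x ≠ g ^ 2) : zpowers x = ⊤ := by
  classical
  have hmem : x ∈ Submonoid.powers g := mem_powers_iff_mem_zpowers.2 <|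
    (zpowers_eq_top_iff_orderOf_eq_natCard.2 (hg.trans h4.symm)) ▸ mem_top x
  rw [mem_powers_iff_mem_range_orderOf, hg] at hmem
  obtain ⟨k, hk, rfl⟩ := Finset.mem_image.1 hmem
  rw [Finset.mem_range] at hk
  rw [zpowers_eq_top_iff_orderOf_eq_natCard, h4]
  interval_cases k
  · exact absurd (pow_zero g) hx1
  · rwa [pow_one]
  · exact absurd rfl hx2
  · rwa [Nat.Coprime.orderOf_pow (by rw [hg]; decide)]

lemma exists_isCutVertex_properRedPowGraph_of_card_eq_four [IsCyclic G] (h4 : Nat.card G = 4) :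
    ∃ v, IsCutVertex (properRedPowGraph G) v := by
  obtain ⟨g, hg⟩ := IsCyclic.exists_ofOrder_eq_natCard (α := G)
  have hgtop : zpowers g = ⊤ := zpowers_eq_top_iff_orderOf_eq_natCard.2 hg
  rw [h4] at hg
  have hg1 : g ≠ 1 := by rintro rfl; simp at hg
  have hsq : orderOf (g ^ 2) = 2 := by rw [orderOf_pow' g two_ne_zero, hg]; rfl
  have hsq1 : g ^ 2 ≠ 1 := by rw [Ne, ← orderOf_eq_one_iff, hsq]; decide
  have hsqtop : zpowers (g ^ 2) ≠ ⊤ := by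
    rw [Ne, zpowers_eq_top_iff_orderOf_eq_natCard, hsq, h4]; decide
  have hne_sq : ∀ a : {x : G // x ≠ 1}, zpowers (a : G) = ⊤ → a ≠ ⟨g ^ 2, hsq1⟩ :=
    fun a ha h => hsqtop (by rwa [h] at ha)
  refine ⟨⟨g ^ 2, hsq1⟩, isCutVertex_of_forall_not_adj_induce
    (properRedPowGraph_connected (a := ⟨g, hg1⟩) (b := ⟨g ^ 2, hsq1⟩) hgtop hsqtop)
    (a := ⟨g, hg1⟩) (b := ⟨g⁻¹, inv_ne_one.2 hg1⟩) ?_ ?_ ?_ ?_⟩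
  · exact hne_sq _ hgtop
  · exact hne_sq _ (zpowers_inv.trans hgtop)
  · exact fun h => ne_inv_of_two_lt_orderOf (x := g) (by omega) (Subtype.ext_iff.1 h)
  · intro u w
    have hgen (a : {u | u ≠ (⟨g ^ 2, hsq1⟩ : {x : G // x ≠ 1})}) : zpowers (a : G) = ⊤ :=
      zpowers_eq_top_of_ne_one_of_ne_sq hg h4 a.1.2 fun h => a.2 (Subtype.ext h)
    exact not_redPowGraph_adj_of_zpowers_eq_top (hgen u) (hgen w)

end

theorem stmt16_general {G : Type*} [Group G] [Fintype G] (hc : IsCyclic G) :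
    (∃ v : {x : G // x ≠ 1}, IsCutVertex (properRedPowGraph G) v) ↔
      Nonempty (G ≃* Multiplicative (ZMod 4)) := by
  have hcard : Nat.card (Multiplicative (ZMod 4)) = 4 := by simp
  constructor
  · rintro ⟨v, hv⟩
    refine ⟨mulEquivOfCyclicCardEq (hcard.symm ▸ ?_)⟩
    by_contra h4
    exact not_isCutVertex_properRedPowGraph_of_card_ne_four h4 v hv
  · rintro ⟨e⟩
    exact exists_isCutVertex_properRedPowGraph_of_card_eq_four
      ((Nat.card_congr e.toEquiv).trans hcard)

/-- For a finite cyclic group G of order at least 2, RP*(G) has a cut vertex iff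
G ≅ ℤ₄. -/
theorem stmt16 {G : Type*} [Group G] [Fintype G] (hc : IsCyclic G)
    (h2 : 2 ≤ Fintype.card G) :
    (∃ v : {x : G // x ≠ 1}, IsCutVertex (properRedPowGraph G) v) ↔
      Nonempty (G ≃* Multiplicative (ZMod 4)) :=
  stmt16_general hc
end

section
/- For a prime p and positive integer n, the vertex connectivity of RP(ℤ_{p^n}) equals p^{n−1}, and the vertex connectivity of RP*(ℤ_{p^n}) equals p^{n−1} − 1. -/
open SimpleGraph

/-- The vertex connectivity of a finite graph: the least size of a set of vertices whose
removal results in a disconnected or trivial (at most one vertex) graph. -/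
noncomputable def vertexConnectivity {V : Type*} [Fintype V] (Γ : SimpleGraph V) : ℕ :=
  sInf {n | ∃ S : Finset V, S.card = n ∧
    (¬ (Γ.induce ((↑S : Set V)ᶜ)).Connected ∨ Fintype.card V ≤ S.card + 1)}

/-! The generators of a finite cyclic group `G` form an independent set of `RP(G)` joined to every
non-generator, so `RP(G)` is the join of the empty graph on the `φ(|G|)` generators with the
graph on the non-generators. Removing all non-generators leaves an edgeless graph; removing
fewer keeps a generator and a non-generator, through which everything stays connected. Hence
`κ(RP(G))` is the number of non-generators as soon as that is at most `φ(|G|)`, which is the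
case for `|G| = p^n`, with `p^(n-1)` non-generators. Deleting the identity, a non-generator,
lowers that side, and hence the connectivity, by one in `RP*(G)`. -/

open Finset

section VertexConnectivity

variable {V : Type*} {Γ : SimpleGraph V}

lemma vertexConnectivity_le_card [Fintype V] {S : Finset V}
    (hS : ¬ (Γ.induce ((↑S : Set V)ᶜ)).Connected ∨ Fintype.card V ≤ #S + 1) :
    vertexConnectivity Γ ≤ #S :=
  Nat.sInf_le ⟨S, rfl, hS⟩

lemma le_vertexConnectivity [Fintype V] {k : ℕ}
    (h : ∀ S : Finset V, #S < k →
      #S + 1 < Fintype.card V ∧ (Γ.induce ((↑S : Set V)ᶜ)).Connected) :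
    k ≤ vertexConnectivity Γ := by
  refine le_csInf ⟨_, univ, rfl, Or.inr (by simp)⟩ ?_
  rintro _ ⟨S, rfl, hS⟩
  by_contra! hlt
  obtain ⟨hcard, hconn⟩ := h S hlt
  rcases hS with hS | hS
  · exact hS hconn
  · omega

lemma not_connected_induce_of_isIndepSet {s : Set V} (hs : Γ.IsIndepSet s)
    (hnt : s.Nontrivial) : ¬ (Γ.induce s).Connected := by
  have hbot : Γ.induce s = ⊥ := by
    ext ⟨u, hu⟩ ⟨v, hv⟩
    simpa using fun h => hs hu hv (Γ.ne_of_adj h) h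
  have : Nontrivial s := hnt.coe_sort
  rw [hbot]
  exact not_connected_bot

lemma connected_induce_of_forall_adj {A s : Set V} (hjoin : ∀ u ∈ A, ∀ v ∉ A, Γ.Adj u v)
    {a b : V} (ha : a ∈ s ∩ A) (hb : b ∈ s \ A) : (Γ.induce s).Connected := by
  refine (connected_iff_exists_forall_reachable _).2 ⟨⟨a, ha.1⟩, fun ⟨z, hz⟩ => ?_⟩
  by_cases hzA : z ∈ A
  · have hab : (Γ.induce s).Adj ⟨a, ha.1⟩ ⟨b, hb.1⟩ := hjoin a ha.2 b hb.2
    have hbz : (Γ.induce s).Adj ⟨b, hb.1⟩ ⟨z, hz⟩ := (hjoin z hzA b hb.2).symm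
    exact hab.reachable.trans hbz.reachable
  · exact Adj.reachable (hjoin a ha.2 z hzA)

theorem vertexConnectivity_eq_card_compl_of_isIndepSet [Fintype V] [DecidableEq V] {A : Finset V}
    (hA : Γ.IsIndepSet A) (hjoin : ∀ u ∈ A, ∀ v ∉ A, Γ.Adj u v) (hcard : #Aᶜ ≤ #A) :
    vertexConnectivity Γ = #Aᶜ := by
  have hV := card_add_card_compl A
  apply le_antisymm
  · apply vertexConnectivity_le_card
    by_cases hA₂ : 1 < #A
    · left
      rw [coe_compl, compl_compl]
      exact not_connected_induce_of_isIndepSet hA (one_lt_card_iff_nontrivial.mp hA₂)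
    · right
      omega
  · refine le_vertexConnectivity fun S hS => ⟨by omega, ?_⟩
    obtain ⟨a, ha⟩ : (A \ S).Nonempty := by
      have := le_card_sdiff S A
      exact card_pos.mp (by omega)
    obtain ⟨b, hb⟩ : (Aᶜ \ S).Nonempty := by
      have := le_card_sdiff S Aᶜ
      exact card_pos.mp (by omega)
    rw [mem_sdiff] at ha hb
    exact connected_induce_of_forall_adj (A := A) hjoin (a := a) (b := b)
      ⟨by simpa using ha.2, ha.1⟩ ⟨by simpa using hb.2, by simpa using hb.1⟩

end VertexConnectivity

section RedPowGraph

open Subgroup Nat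

variable {G : Type*} [Group G]

lemma not_redPowGraph_adj_of_zpowers_eq_top_s17 {u v : G} (hu : zpowers u = ⊤)
    (hv : zpowers v = ⊤) : ¬ (redPowGraph G).Adj u v := by
  rintro (h | h) <;> simp [hu, hv] at h

lemma redPowGraph_adj_of_zpowers_eq_top_s17 {u v : G} (hu : zpowers u = ⊤)
    (hv : zpowers v ≠ ⊤) : (redPowGraph G).Adj u v :=
  Or.inr (hu ▸ lt_top_iff_ne_top.mpr hv)

lemma ne_one_of_zpowers_eq_top [Nontrivial G] {g : G} (hg : zpowers g = ⊤) : g ≠ 1 := by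
  rintro rfl
  rw [zpowers_one_eq_bot] at hg
  exact bot_ne_top hg

lemma zpowers_eq_top_iff_orderOf_eq_card [Finite G] {g : G} :
    zpowers g = ⊤ ↔ orderOf g = Nat.card G := by
  rw [← card_eq_iff_eq_top, Nat.card_zpowers]

variable [Fintype G]

lemma card_filter_zpowers_eq_top [IsCyclic G] [DecidablePred fun g : G => zpowers g = ⊤] :
    #{g : G | zpowers g = ⊤} = φ (Fintype.card G) := by
  rw [← IsCyclic.card_orderOf_eq_totient dvd_rfl]
  congr 1
  ext g
  simp [zpowers_eq_top_iff_orderOf_eq_card, Nat.card_eq_fintype_card]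

theorem vertexConnectivity_redPowGraph [IsCyclic G]
    (h : Fintype.card G ≤ 2 * φ (Fintype.card G)) :
    vertexConnectivity (redPowGraph G) = Fintype.card G - φ (Fintype.card G) := by
  classical
  have hA := card_filter_zpowers_eq_top (G := G)
  rw [← hA, ← card_compl]
  refine vertexConnectivity_eq_card_compl_of_isIndepSet ?_ ?_ (by rw [card_compl]; omega)
  · intro u hu v hv _
    simp only [coe_filter, mem_univ, true_and, Set.mem_ofPred_eq] at hu hv
    exact not_redPowGraph_adj_of_zpowers_eq_top_s17 hu hv
  · intro u hu v hv
    simp only [mem_filter, mem_univ, true_and] at hu hv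
    exact redPowGraph_adj_of_zpowers_eq_top_s17 hu hv

theorem vertexConnectivity_properRedPowGraph [DecidableEq G] [IsCyclic G] [Nontrivial G]
    (h : Fintype.card G - 1 ≤ 2 * φ (Fintype.card G)) :
    vertexConnectivity (properRedPowGraph G) = Fintype.card G - 1 - φ (Fintype.card G) := by
  classical
  set A : Finset {x : G // x ≠ 1} := {x | zpowers (x : G) = ⊤}
  have hA : #A = φ (Fintype.card G) := by
    rw [← card_filter_zpowers_eq_top]
    refine card_bij (fun x _ => x.1) (by simp [A]) (fun _ _ _ _ => Subtype.ext) ?_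
    intro g hg
    simp only [mem_filter, mem_univ, true_and] at hg
    exact ⟨⟨g, ne_one_of_zpowers_eq_top hg⟩, by simpa [A] using hg, rfl⟩
  have hcard : Fintype.card {x : G // x ≠ 1} = Fintype.card G - 1 := by
    rw [Fintype.card_subtype_compl, Fintype.card_subtype_eq]
  rw [← hA, ← hcard, ← card_compl]
  refine vertexConnectivity_eq_card_compl_of_isIndepSet (A := A) ?_ ?_ (by rw [card_compl]; omega)
  · intro u hu v hv _
    simp only [A, coe_filter, mem_univ, true_and, Set.mem_ofPred_eq] at hu hv
    exact not_redPowGraph_adj_of_zpowers_eq_top_s17 hu hv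
  · intro u hu v hv
    simp only [A, mem_filter, mem_univ, true_and] at hu hv
    exact redPowGraph_adj_of_zpowers_eq_top_s17 hu hv

end RedPowGraph

/-- κ(RP(ℤ_{p^n})) = p^{n−1} and κ(RP*(ℤ_{p^n})) = p^{n−1} − 1. -/
theorem stmt17 (p n : ℕ) (hp : p.Prime) (hn : 1 ≤ n) :
    letI : NeZero (p ^ n) := ⟨pow_ne_zero n hp.ne_zero⟩
    vertexConnectivity (redPowGraph (Multiplicative (ZMod (p ^ n)))) = p ^ (n - 1) ∧
    vertexConnectivity (properRedPowGraph (Multiplicative (ZMod (p ^ n)))) = p ^ (n - 1) - 1 := by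
  have : NeZero (p ^ n) := ⟨pow_ne_zero n hp.ne_zero⟩
  obtain ⟨m, rfl⟩ : ∃ m, n = m + 1 := ⟨n - 1, by omega⟩
  have hcard : Fintype.card (Multiplicative (ZMod (p ^ (m + 1)))) = p ^ (m + 1) := by simp
  have hφ : Nat.totient (p ^ (m + 1)) = p ^ m * (p - 1) := Nat.totient_prime_pow_succ hp m
  have hpow : p ^ (m + 1) = p ^ m * (p - 1) + p ^ m := by
    zify [hp.one_le]
    ring
  have hle : p ^ m ≤ p ^ m * (p - 1) := Nat.le_mul_of_pos_right _ (by have := hp.two_le; omega)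
  have : Nontrivial (Multiplicative (ZMod (p ^ (m + 1)))) :=
    Fintype.one_lt_card_iff_nontrivial.mp (by rw [hcard]; exact Nat.one_lt_pow (by omega) hp.one_lt)
  rw [Nat.add_sub_cancel, vertexConnectivity_redPowGraph (by rw [hcard, hφ]; omega),
    vertexConnectivity_properRedPowGraph (by rw [hcard, hφ]; omega), hcard, hφ]
  omega
end
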